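/- arXiv:2401.15722 — 5 statements merged into one kernel-verified Lean document; each statement's English description precedes it below -/
import Mathlib

section
/- For all integers $n \ge 1$ and $0 \le s \le n-1$, $\sum_{j=0}^{s}\binom{s}{j}(-1)^j\frac{n}{n-s+j} = \binom{n-1}{s}^{-1}$. -/
open Finset

lemma aux_sum (s : ℕ) : ∀ x : ℚ, (∀ j ∈ Finset.range (s + 1), x + j ≠ 0) →
    ∑ j ∈ Finset.range (s + 1), (s.choose j : ℚ) * (-1) ^ j / (x + j)
      = (s.factorial : ℚ) / ∏ i ∈ Finset.range (s + 1), (x + i) := by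
  induction s with
  | zero => intro x hx; simp
  | succ s ih =>
    intro x hx
    have hx0 : ∀ j ∈ Finset.range (s + 1), x + j ≠ 0 := fun j hj =>
      hx j (mem_range.mpr (Nat.lt_succ_of_lt (mem_range.mp hj)))
    have hx1 : ∀ j ∈ Finset.range (s + 1), (x + 1) + j ≠ 0 := by
      intro j hj
      have hj' := mem_range.mp hj
      have h := hx (j + 1) (mem_range.mpr (by omega))
      push_cast at h
      intro hc; apply h; linarith
    have hxs : x + (s + 1 : ℚ) ≠ 0 := by
      have h := hx (s + 1) (mem_range.mpr (by omega))
      push_cast at h; exact h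
    have hx' : x ≠ 0 := by have := hx 0 (mem_range.mpr (by omega)); simpa using this
    set Px := ∏ i ∈ Finset.range (s + 1), (x + (i : ℚ)) with hPxdef
    set Px1 := ∏ i ∈ Finset.range (s + 1), ((x + 1) + (i : ℚ)) with hPx1def
    have hPx : Px ≠ 0 := Finset.prod_ne_zero_iff.mpr hx0
    have hPx1 : Px1 ≠ 0 := Finset.prod_ne_zero_iff.mpr hx1
    have hQ1 : ∏ i ∈ Finset.range (s + 2), (x + (i : ℚ)) = Px * (x + (s + 1 : ℚ)) := by
      rw [Finset.prod_range_succ]; push_cast; ring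
    have hQ2 : ∏ i ∈ Finset.range (s + 2), (x + (i : ℚ)) = x * Px1 := by
      rw [Finset.prod_range_succ']
      rw [Finset.prod_congr rfl (fun i _ => show x + ((i + 1 : ℕ) : ℚ) = (x + 1) + i by
        push_cast; ring)]
      push_cast; ring
    have hrel : x * Px1 = Px * (x + (s + 1 : ℚ)) := by rw [← hQ2, hQ1]
    have hsplit : ∀ i ∈ Finset.range (s + 1),
        (((s + 1).choose (i + 1) : ℚ)) * (-1) ^ (i + 1) / (x + ((i + 1 : ℕ) : ℚ))
          = (s.choose (i + 1) : ℚ) * (-1) ^ (i + 1) / (x + ((i + 1 : ℕ) : ℚ))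
            - (s.choose i : ℚ) * (-1) ^ i / ((x + 1) + i) := by
      intro i _
      rw [Nat.choose_succ_succ]
      have hd : x + ((i + 1 : ℕ) : ℚ) = (x + 1) + i := by push_cast; ring
      rw [hd]
      push_cast
      ring
    rw [Finset.sum_range_succ', Finset.sum_congr rfl hsplit, Finset.sum_sub_distrib]
    have h2 : (∑ j ∈ Finset.range (s + 2), (s.choose j : ℚ) * (-1) ^ j / (x + j))
        = ∑ j ∈ Finset.range (s + 1), (s.choose j : ℚ) * (-1) ^ j / (x + j) := by
      rw [Finset.sum_range_succ, Nat.choose_succ_self]; simp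
    have hS1 : (∑ i ∈ Finset.range (s + 1),
          (s.choose (i + 1) : ℚ) * (-1) ^ (i + 1) / (x + ((i + 1 : ℕ) : ℚ)))
        + (s.choose 0 : ℚ) * (-1) ^ 0 / (x + ((0 : ℕ) : ℚ))
        = (s.factorial : ℚ) / Px := by
      have e := Finset.sum_range_succ'
        (fun j => (s.choose j : ℚ) * (-1) ^ j / (x + (j : ℚ))) (s + 1)
      rw [← e, h2, ih x hx0]
    have hzero : (((s + 1).choose 0 : ℚ)) * (-1) ^ 0 / (x + ((0 : ℕ) : ℚ))
        = (s.choose 0 : ℚ) * (-1) ^ 0 / (x + ((0 : ℕ) : ℚ)) := by norm_num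
    have hS2 : (∑ i ∈ Finset.range (s + 1), (s.choose i : ℚ) * (-1) ^ i / ((x + 1) + i))
        = (s.factorial : ℚ) / Px1 := ih (x + 1) hx1
    rw [sub_add_eq_add_sub, hzero, hS1, hS2, hQ2]
    have hfac : (((s + 1).factorial : ℚ)) = (s + 1 : ℚ) * (s.factorial : ℚ) := by
      push_cast [Nat.factorial_succ]; ring
    rw [hfac, div_sub_div _ _ hPx hPx1,
      div_eq_div_iff (mul_ne_zero hPx hPx1) (mul_ne_zero hx' hPx1)]
    linear_combination (s.factorial : ℚ) * Px1 * hrel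

theorem stmt_0 (n s : ℕ) (hn : 1 ≤ n) (hs : s ≤ n - 1) :
    ∑ j ∈ Finset.range (s + 1),
      (s.choose j : ℚ) * (-1) ^ j * ((n : ℚ) / ((n : ℚ) - (s : ℚ) + (j : ℚ)))
      = (((n - 1).choose s : ℚ))⁻¹ := by
  have hsn : s < n := by omega
  set x : ℚ := (n : ℚ) - (s : ℚ) with hxdef
  have hxpos : 0 < x := by
    have h : (s : ℚ) < (n : ℚ) := by exact_mod_cast hsn
    rw [hxdef]; linarith
  have hx : ∀ j ∈ Finset.range (s + 1), x + j ≠ 0 := by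
    intro j hj
    have hj2 : (0 : ℚ) ≤ (j : ℚ) := Nat.cast_nonneg j
    positivity
  have key := aux_sum s x hx
  have hL : ∑ j ∈ Finset.range (s + 1),
      (s.choose j : ℚ) * (-1) ^ j * ((n : ℚ) / (x + j))
      = (n : ℚ) * ∑ j ∈ Finset.range (s + 1), (s.choose j : ℚ) * (-1) ^ j / (x + j) := by
    rw [Finset.mul_sum]
    exact Finset.sum_congr rfl (fun j _ => by ring)
  rw [hL, key]
  have hprod : (∏ i ∈ Finset.range (s + 1), (x + i))
      = ((n - s).ascFactorial (s + 1) : ℚ) := by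
    have hcast : x = ((n - s : ℕ) : ℚ) := by
      rw [hxdef, Nat.cast_sub (le_of_lt hsn)]
    rw [hcast]
    rw [show ((n - s).ascFactorial (s + 1) : ℚ)
        = ((∏ i ∈ Finset.range (s + 1), (n - s + i) : ℕ) : ℚ) from ?_]
    · push_cast; rfl
    · congr 1
      induction (s + 1) with
      | zero => simp
      | succ k ihk => rw [Nat.ascFactorial_succ, Finset.prod_range_succ, ihk]; ring
  rw [hprod]
  have hnat : (n - 1).choose s * (n * s.factorial) = (n - s).ascFactorial (s + 1) := by
    have h1 : (n - s - 1).factorial * (n - s).ascFactorial (s + 1)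
        = (n - s + (s + 1) - 1).factorial :=
      Nat.factorial_mul_ascFactorial' (n - s) (s + 1) (by omega)
    have h2 : n - s + (s + 1) - 1 = n := by omega
    rw [h2] at h1
    have h3 : (n - 1).choose s * s.factorial * (n - 1 - s).factorial = (n - 1).factorial :=
      Nat.choose_mul_factorial_mul_factorial hs
    have h4 : n - s - 1 = n - 1 - s := by omega
    have h5 : n * (n - 1).factorial = n.factorial := by
      rw [← Nat.succ_pred_eq_of_pos (by omega : 0 < n), Nat.factorial_succ]
      simp
    have hfne : (n - 1 - s).factorial ≠ 0 := Nat.factorial_ne_zero _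
    apply Nat.eq_of_mul_eq_mul_right (Nat.pos_of_ne_zero hfne)
    rw [← h4] at h3 ⊢
    calc (n - 1).choose s * (n * s.factorial) * (n - s - 1).factorial
        = n * ((n - 1).choose s * s.factorial * (n - s - 1).factorial) := by ring
      _ = n * (n - 1).factorial := by rw [h3]
      _ = n.factorial := h5
      _ = (n - s - 1).factorial * (n - s).ascFactorial (s + 1) := h1.symm
      _ = (n - s).ascFactorial (s + 1) * (n - s - 1).factorial := by ring
  have hApos : 0 < (n - s).ascFactorial (s + 1) := by
    rw [← hnat]
    have hc : 0 < (n - 1).choose s := Nat.choose_pos hs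
    have hf : 0 < s.factorial := Nat.factorial_pos s
    positivity
  have hA : (((n - s).ascFactorial (s + 1) : ℕ) : ℚ) ≠ 0 :=
    Nat.cast_ne_zero.mpr (Nat.pos_iff_ne_zero.mp hApos)
  have hC : (((n - 1).choose s : ℕ) : ℚ) ≠ 0 :=
    Nat.cast_ne_zero.mpr (Nat.pos_iff_ne_zero.mp (Nat.choose_pos hs))
  have hq : (((n - 1).choose s : ℕ) : ℚ) * ((n : ℚ) * (s.factorial : ℚ))
      = (((n - s).ascFactorial (s + 1) : ℕ) : ℚ) := by exact_mod_cast hnat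
  field_simp
  linear_combination hq
end

section
/- Let $q$ be a prime power, $k \ge 1$, and let $U \le \mathbb{F}_q^k$ be a subspace of dimension $u$. For $k - u \le v \le k$, the number of subspaces $V \le \mathbb{F}_q^k$ with $\dim V = v$ and $U + V = \mathbb{F}_q^k$ equals $\sum_{l=u}^{k} \binom{k-u}{l-u}_q (-1)^{k-l} q^{\binom{k-l}{2}} \binom{l}{v}_q$. -/
/-- The Gaussian (q-ary) binomial coefficient `[a choose b]_q`, defined for integer
indices and equal to `0` when `b < 0` or `b > a`. -/
noncomputable def qbin (q : ℚ) (a b : ℤ) : ℚ :=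
  if 0 ≤ b ∧ b ≤ a then
    ∏ i ∈ Finset.range b.toNat, (q ^ (a - i).toNat - 1) / (q ^ (b - i).toNat - 1)
  else 0

open Finset

/-- q-factorial-like product ∏_{i=1}^t (q^i - 1). -/
noncomputable def qP (q : ℚ) (t : ℕ) : ℚ := ∏ i ∈ range t, (q ^ (i + 1) - 1)

/-- Gaussian binomial as a ratio, with an if guard. -/
noncomputable def qB (q : ℚ) (n j : ℕ) : ℚ :=
  if j ≤ n then qP q n / (qP q j * qP q (n - j)) else 0

lemma qP_succ (q : ℚ) (t : ℕ) : qP q (t + 1) = qP q t * (q ^ (t + 1) - 1) := by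
  simp [qP, prod_range_succ]

lemma qP_zero (q : ℚ) : qP q 0 = 1 := by simp [qP]

lemma qP_ne_zero {q : ℚ} (hq : 1 < q) (t : ℕ) : qP q t ≠ 0 := by
  apply Finset.prod_ne_zero_iff.2
  intro i _
  have : (1:ℚ) < q ^ (i+1) := one_lt_pow₀ hq (by omega)
  linarith

lemma qpow_sub_one_ne_zero {q : ℚ} (hq : 1 < q) {t : ℕ} (ht : 1 ≤ t) : q ^ t - 1 ≠ 0 := by
  have : (1:ℚ) < q ^ t := one_lt_pow₀ hq (by omega)
  linarith

lemma qP_shift (q : ℚ) {n j : ℕ} (h : j ≤ n) :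
    qP q n = qP q (n - j) * ∏ i ∈ range j, (q ^ (n - i) - 1) := by
  obtain ⟨d, rfl⟩ : ∃ d, n = d + j := ⟨n - j, by omega⟩
  rw [qP, prod_range_add, show d + j - j = d from by omega]
  congr 1
  rw [← prod_range_reflect]
  apply prod_congr rfl
  intro i hi
  simp only [mem_range] at hi
  congr 2
  omega

lemma qP_self (q : ℚ) (j : ℕ) : qP q j = ∏ i ∈ range j, (q ^ (j - i) - 1) := by
  have := qP_shift q (le_refl j)
  simpa [qP] using this

lemma qB_eq_prod {q : ℚ} (hq : 1 < q) {n j : ℕ} (h : j ≤ n) :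
    qB q n j = ∏ i ∈ range j, (q ^ (n - i) - 1) / (q ^ (j - i) - 1) := by
  rw [qB, if_pos h, Finset.prod_div_distrib, ← qP_self, qP_shift q h]
  have h1 := qP_ne_zero hq j
  have h2 := qP_ne_zero hq (n - j)
  field_simp

lemma qB_zero {q : ℚ} (hq : 1 < q) (n : ℕ) : qB q n 0 = 1 := by
  rw [qB, if_pos (Nat.zero_le n)]
  simp only [Nat.sub_zero, qP_zero, one_mul]
  exact div_self (qP_ne_zero hq n)

lemma qB_self {q : ℚ} (hq : 1 < q) (n : ℕ) : qB q n n = 1 := by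
  rw [qB, if_pos le_rfl]
  simp only [Nat.sub_self, qP_zero, mul_one]
  exact div_self (qP_ne_zero hq n)

lemma qB_gt (q : ℚ) {n j : ℕ} (h : n < j) : qB q n j = 0 := by
  rw [qB, if_neg (by omega)]

/-- Pascal recurrence in additive form. -/
lemma qB_pascal {q : ℚ} (hq : 1 < q) (a b : ℕ) :
    qB q (a + b + 2) (a + 1) = q ^ (a + 1) * qB q (a + b + 1) (a + 1) + qB q (a + b + 1) a := by
  have h1 : a + 1 ≤ a + b + 2 := by omega
  have h2 : a + 1 ≤ a + b + 1 := by omega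
  have h3 : a ≤ a + b + 1 := by omega
  rw [qB, if_pos h1, qB, if_pos h2, qB, if_pos h3,
    show a + b + 2 - (a + 1) = b + 1 from by omega,
    show a + b + 1 - (a + 1) = b from by omega,
    show a + b + 1 - a = b + 1 from by omega,
    show a + b + 2 = (a + b + 1) + 1 from by omega, qP_succ,
    qP_succ q b, qP_succ q a]
  have hP1 := qP_ne_zero hq (a + b + 1)
  have hPa := qP_ne_zero hq a
  have hPb := qP_ne_zero hq b
  have ha1 : q ^ (a + 1) - 1 ≠ 0 := qpow_sub_one_ne_zero hq (by omega)
  have hb1 : q ^ (b + 1) - 1 ≠ 0 := qpow_sub_one_ne_zero hq (by omega)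
  have hab1 : q ^ (a + b + 1 + 1) - 1 ≠ 0 := qpow_sub_one_ne_zero hq (by omega)
  field_simp
  rw [show q ^ (a + b + 1 + 1) = q ^ (a + 1) * q ^ (b + 1) from by rw [← pow_add]; ring_nf]
  ring

/-- The alternating sum identity: ∑_{j=0}^m (-1)^j q^{C(j,2)} [m choose j]_q = δ_{m,0}. -/
lemma qB_alt_sum {q : ℚ} (hq : 1 < q) (m : ℕ) :
    ∑ j ∈ range (m + 1), (-1 : ℚ) ^ j * q ^ (j.choose 2) * qB q m j
      = if m = 0 then 1 else 0 := by
  induction m with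
  | zero => simp [qB_zero hq]
  | succ m ih =>
    rw [if_neg (by omega)]
    have key : ∀ j ∈ range (m + 2), (-1 : ℚ) ^ j * q ^ (j.choose 2) * qB q (m + 1) j
        = ((-1 : ℚ) ^ j * q ^ (j.choose 2) * q ^ j * qB q m j)
          + (if 1 ≤ j then (-1 : ℚ) ^ j * q ^ (j.choose 2) * qB q m (j - 1) else 0) := by
      intro j hj
      rcases Nat.eq_zero_or_pos j with rfl | hjpos
      · simp [qB_zero hq]
      · obtain ⟨a, rfl⟩ : ∃ a, j = a + 1 := ⟨j - 1, by omega⟩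
        rw [if_pos (by omega), show a + 1 - 1 = a from rfl]
        rcases lt_trichotomy (a + 1) (m + 1) with hlt | heq | hgt
        · obtain ⟨b, hb⟩ : ∃ b, m = a + b + 1 := ⟨m - a - 1, by omega⟩
          subst hb
          rw [show a + b + 1 + 1 = a + b + 2 from rfl, qB_pascal hq a b]
          ring
        · obtain rfl : a = m := by omega
          rw [qB_self hq, qB_gt q (by omega), qB_self hq]
          ring
        · rw [qB_gt q (by omega), qB_gt q (by omega), qB_gt q (by omega)]
          ring
    rw [Finset.sum_congr rfl key, Finset.sum_add_distrib]
    have e1 : ∑ j ∈ range (m + 2), (-1 : ℚ) ^ j * q ^ (j.choose 2) * q ^ j * qB q m j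
        = ∑ j ∈ range (m + 1), (-1 : ℚ) ^ j * q ^ (j.choose 2) * q ^ j * qB q m j := by
      rw [Finset.sum_range_succ, qB_gt q (by omega)]
      simp
    have e2 : ∑ j ∈ range (m + 2),
          (if 1 ≤ j then (-1 : ℚ) ^ j * q ^ (j.choose 2) * qB q m (j - 1) else 0)
        = ∑ j ∈ range (m + 1), (-1 : ℚ) ^ (j+1) * q ^ ((j+1).choose 2) * qB q m j := by
      rw [Finset.sum_range_succ']
      rw [if_neg (by omega), add_zero]
      apply Finset.sum_congr rfl
      intro j _
      rw [if_pos (by omega)]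
      simp
    rw [e1, e2, ← Finset.sum_add_distrib]
    rw [← Finset.sum_const_zero (s := range (m+1))]
    apply Finset.sum_congr rfl
    intro j _
    have hch : (j + 1).choose 2 = j.choose 2 + j := by
      rw [Nat.choose_two_right, Nat.choose_two_right, Nat.triangle_succ]
    rw [hch, pow_add, pow_succ]
    ring
open Finset Submodule Module

attribute [local instance] Fintype.ofFinite

section Counting

variable {K : Type*} [Field K] [Fintype K]
variable {M : Type*} [AddCommGroup M] [Module K M] [Finite M]

instance : Finite (Submodule K M) :=
  Finite.of_injective (fun W => (W : Set M)) SetLike.coe_injective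

/-- Fiber of the span map over a subspace `W` of dimension `j` is equivalent to
independent `j`-tuples in `W`. -/
noncomputable def fiberEquiv (j : ℕ) (W : Submodule K M) (hW : finrank K W = j) :
    {t : Fin j → W // LinearIndependent K t} ≃
      {s : {s : Fin j → M // LinearIndependent K s} // Submodule.span K (Set.range s.1) = W} where
  toFun t := ⟨⟨fun i => (t.1 i : M), t.2.map' W.subtype W.ker_subtype⟩, by
    have h1 : Set.range (fun i => (t.1 i : M)) = W.subtype '' Set.range t.1 :=
      Set.range_comp W.subtype t.1
    have h2 : Submodule.span K (Set.range t.1) = ⊤ := by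
      apply Submodule.eq_top_of_finrank_eq
      rw [finrank_span_eq_card t.2, Fintype.card_fin, hW]
    show Submodule.span K (Set.range fun i => (t.1 i : M)) = W
    rw [h1, Submodule.span_image, h2, Submodule.map_subtype_top]⟩
  invFun s := ⟨fun i => ⟨s.1.1 i, by
      have hmem : s.1.1 i ∈ Submodule.span K (Set.range s.1.1) :=
        subset_span (Set.mem_range_self i)
      rwa [s.2] at hmem⟩,
    LinearIndependent.of_comp W.subtype (by exact s.1.2)⟩
  left_inv t := Subtype.ext (funext fun i => Subtype.ext rfl)
  right_inv s := Subtype.ext (Subtype.ext (funext fun i => rfl))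

lemma card_indep_mul (j : ℕ) :
    Nat.card {s : Fin j → M // LinearIndependent K s}
      = Nat.card {W : Submodule K M // finrank K W = j}
          * ∏ i ∈ range j, (Fintype.card K ^ j - Fintype.card K ^ i) := by
  classical
  set F : {s : Fin j → M // LinearIndependent K s} → {W : Submodule K M // finrank K W = j} :=
    fun s => ⟨Submodule.span K (Set.range s.1), by
      rw [finrank_span_eq_card s.2, Fintype.card_fin]⟩ with hF
  rw [← Nat.card_congr (Equiv.sigmaFiberEquiv F)]
  rw [Nat.card_eq_fintype_card, Fintype.card_sigma]
  have hfib : ∀ W : {W : Submodule K M // finrank K W = j},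
      Fintype.card {s // F s = W}
        = ∏ i ∈ range j, (Fintype.card K ^ j - Fintype.card K ^ i) := by
    rintro ⟨W, hW⟩
    have e1 : {s // F s = ⟨W, hW⟩} ≃
        {s : {s : Fin j → M // LinearIndependent K s} // Submodule.span K (Set.range s.1) = W} :=
      Equiv.subtypeEquivRight (fun s => by simp [hF, Subtype.ext_iff])
    rw [Fintype.card_congr (e1.trans (fiberEquiv j W hW).symm)]
    have := card_linearIndependent (K := K) (V := W) (k := j) (by rw [hW])
    rw [Nat.card_eq_fintype_card] at this
    rw [this, hW, ← Finset.prod_range fun i => Fintype.card K ^ j - Fintype.card K ^ i]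
  rw [Finset.sum_congr rfl (fun W _ => hfib W), Finset.sum_const, card_univ,
    Nat.card_eq_fintype_card, smul_eq_mul]

lemma card_subspaces_nat (j : ℕ) (hj : j ≤ finrank K M) :
    Nat.card {W : Submodule K M // finrank K W = j}
        * ∏ i ∈ range j, (Fintype.card K ^ j - Fintype.card K ^ i)
      = ∏ i ∈ range j, (Fintype.card K ^ finrank K M - Fintype.card K ^ i) := by
  rw [← card_indep_mul]
  have := card_linearIndependent (K := K) (V := M) (k := j) hj
  rw [this, ← Finset.prod_range fun i => Fintype.card K ^ finrank K M - Fintype.card K ^ i]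

lemma card_subspaces_empty (j : ℕ) (hj : finrank K M < j) :
    Nat.card {W : Submodule K M // finrank K W = j} = 0 := by
  rw [Nat.card_eq_zero]
  left
  constructor
  rintro ⟨W, hW⟩
  have := Submodule.finrank_le W
  omega

end Counting

section CountingQ

variable {K : Type*} [Field K] [Fintype K]
variable {M : Type*} [AddCommGroup M] [Module K M] [Finite M]

lemma one_lt_qcard : (1 : ℚ) < (Fintype.card K : ℚ) := by
  have : 1 < Fintype.card K := Fintype.one_lt_card
  exact_mod_cast this

/-- Cast product of (q^n - q^i) into the q-factorial shape. -/
lemma cast_prod_pow_sub {n j : ℕ} (hj : j ≤ n) :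
    ((∏ i ∈ range j, (Fintype.card K ^ n - Fintype.card K ^ i) : ℕ) : ℚ)
      = (∏ i ∈ range j, (Fintype.card K : ℚ) ^ i)
          * ∏ i ∈ range j, ((Fintype.card K : ℚ) ^ (n - i) - 1) := by
  rw [Nat.cast_prod, ← Finset.prod_mul_distrib]
  apply Finset.prod_congr rfl
  intro i hi
  simp only [mem_range] at hi
  have h1 : Fintype.card K ^ i ≤ Fintype.card K ^ n :=
    Nat.pow_le_pow_right Fintype.card_pos (by omega)
  rw [Nat.cast_sub h1]
  push_cast
  rw [mul_sub, mul_one, ← pow_add, show i + (n - i) = n from by omega]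

/-- The number of `j`-dimensional subspaces of a finite `K`-module, as a rational. -/
lemma card_subspaces_rat (j : ℕ) :
    (Nat.card {W : Submodule K M // finrank K W = j} : ℚ)
      = qB (Fintype.card K) (finrank K M) j := by
  set q : ℚ := (Fintype.card K : ℚ)
  have hq : (1:ℚ) < q := one_lt_qcard
  rcases le_or_gt j (finrank K M) with hj | hj
  · have hnat := card_subspaces_nat (K := K) (M := M) j hj
    have hcast : (Nat.card {W : Submodule K M // finrank K W = j} : ℚ)
        * ((∏ i ∈ range j, (Fintype.card K ^ j - Fintype.card K ^ i) : ℕ) : ℚ)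
        = ((∏ i ∈ range j, (Fintype.card K ^ finrank K M - Fintype.card K ^ i) : ℕ) : ℚ) := by
      rw [← Nat.cast_mul, hnat]
    rw [cast_prod_pow_sub le_rfl, cast_prod_pow_sub hj] at hcast
    have hpow : (∏ i ∈ range j, q ^ i) ≠ 0 := by
      apply Finset.prod_ne_zero_iff.2
      intro i _
      positivity
    have hden : (∏ i ∈ range j, (q ^ (j - i) - 1)) ≠ 0 := by
      apply Finset.prod_ne_zero_iff.2
      intro i hi
      simp only [mem_range] at hi
      exact qpow_sub_one_ne_zero hq (by omega)
    have key : (Nat.card {W : Submodule K M // finrank K W = j} : ℚ)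
        * ∏ i ∈ range j, (q ^ (j - i) - 1)
        = ∏ i ∈ range j, (q ^ (finrank K M - i) - 1) := by
      apply mul_left_cancel₀ hpow
      linear_combination hcast
    rw [qB_eq_prod hq hj, Finset.prod_div_distrib, eq_div_iff hden]
    exact key
  · rw [card_subspaces_empty j hj, qB_gt _ hj, Nat.cast_zero]

/-- Subspaces of dimension `v` contained in `W`. -/
lemma card_le_subspaces_rat (W : Submodule K M) (v : ℕ) :
    (Nat.card {V : Submodule K M // V ≤ W ∧ finrank K V = v} : ℚ)
      = qB (Fintype.card K) (finrank K W) v := by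
  rw [← card_subspaces_rat (M := W) v]
  congr 1
  apply Nat.card_congr
  exact {
    toFun := fun V => ⟨Submodule.comap W.subtype V.1, by
      rw [(Submodule.comapSubtypeEquivOfLe V.2.1).finrank_eq, V.2.2]⟩
    invFun := fun V' => ⟨Submodule.map W.subtype V'.1,
      ⟨Submodule.map_subtype_le W V'.1, by
        rw [Submodule.finrank_map_subtype_eq, V'.2]⟩⟩
    left_inv := fun V => Subtype.ext (Submodule.map_comap_eq_of_le
      (by rw [Submodule.range_subtype]; exact V.2.1))
    right_inv := fun V' => Subtype.ext
      (Submodule.comap_map_eq_of_injective W.injective_subtype V'.1) }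

/-- Subspaces of dimension `l` containing `U`. -/
lemma card_ge_subspaces_rat (U : Submodule K M) {u l : ℕ} (hU : finrank K U = u) (hl : u ≤ l) :
    (Nat.card {W : Submodule K M // U ≤ W ∧ finrank K W = l} : ℚ)
      = qB (Fintype.card K) (finrank K M - u) (l - u) := by
  have hquot : finrank K (M ⧸ U) = finrank K M - u := by
    have := Submodule.finrank_quotient_add_finrank U
    omega
  rw [← hquot, ← card_subspaces_rat (M := M ⧸ U) (l - u)]
  congr 1
  apply Nat.card_congr
  have hrank : ∀ W' : Submodule K (M ⧸ U), finrank K (Submodule.comap U.mkQ W') = finrank K W' + u := by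
    intro W'
    set C := Submodule.comap U.mkQ W' with hC
    have hUC : U ≤ C := by
      intro x hx
      simp only [hC, Submodule.mem_comap]
      have : U.mkQ x = 0 := by
        rw [← LinearMap.mem_ker, Submodule.ker_mkQ]
        exact hx
      rw [this]
      exact W'.zero_mem
    have hrn := LinearMap.finrank_range_add_finrank_ker (U.mkQ.comp C.subtype)
    have hrange : LinearMap.range (U.mkQ.comp C.subtype) = W' := by
      rw [LinearMap.range_comp, Submodule.range_subtype]
      exact Submodule.map_comap_eq_of_surjective U.mkQ_surjective W'
    have hker : LinearMap.ker (U.mkQ.comp C.subtype) = Submodule.comap C.subtype U := by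
      rw [LinearMap.ker_comp, Submodule.ker_mkQ]
    rw [hrange, hker] at hrn
    have := (Submodule.comapSubtypeEquivOfLe hUC).finrank_eq
    omega
  have hU_le_comap : ∀ W' : Submodule K (M ⧸ U), U ≤ Submodule.comap U.mkQ W' := by
    intro W' x hx
    simp only [Submodule.mem_comap]
    have hx0 : U.mkQ x = 0 := by
      rw [← LinearMap.mem_ker, Submodule.ker_mkQ]; exact hx
    rw [hx0]; exact W'.zero_mem
  have hcm : ∀ W : Submodule K M, U ≤ W →
      Submodule.comap U.mkQ (Submodule.map U.mkQ W) = W := by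
    intro W hW
    rw [Submodule.comap_map_eq, Submodule.ker_mkQ, sup_eq_left.2 hW]
  exact {
    toFun := fun W => ⟨Submodule.map U.mkQ W.1, by
      have h1 := hrank (Submodule.map U.mkQ W.1)
      rw [hcm W.1 W.2.1, W.2.2] at h1
      omega⟩
    invFun := fun W' => ⟨Submodule.comap U.mkQ W'.1, ⟨hU_le_comap W'.1, by
      rw [hrank W'.1, W'.2]; omega⟩⟩
    left_inv := fun W => Subtype.ext (hcm W.1 W.2.1)
    right_inv := fun W' => Subtype.ext
      (Submodule.map_comap_eq_of_surjective U.mkQ_surjective W'.1) }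

end CountingQ

section Main

open scoped Classical

variable {K : Type*} [Field K] [Fintype K]
variable {M : Type*} [AddCommGroup M] [Module K M] [Finite M]

lemma filter_card_eq_nat_card {α : Type*} [Fintype α] (p : α → Prop) [DecidablePred p] :
    (univ.filter p).card = Nat.card {x // p x} := by
  rw [← Fintype.card_subtype]
  exact (Nat.card_eq_fintype_card).symm

lemma qB_symm {q : ℚ} {m j : ℕ} (h : j ≤ m) : qB q m (m - j) = qB q m j := by
  rw [qB, qB, if_pos h, if_pos (by omega), show m - (m - j) = j from by omega, mul_comm]

/-- Step B : the Möbius sum over subspaces containing `W'`. -/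
lemma moebius_sum (W' : Submodule K M) :
    ∑ W ∈ univ.filter (fun W : Submodule K M => W' ≤ W),
        ((-1 : ℚ) ^ (finrank K M - finrank K ↥W)
          * (Fintype.card K : ℚ) ^ ((finrank K M - finrank K ↥W).choose 2))
      = if W' = ⊤ then 1 else 0 := by
  have hq : (1:ℚ) < (Fintype.card K : ℚ) := one_lt_qcard
  have hwk : finrank K ↥W' ≤ finrank K M := Submodule.finrank_le W'
  have hmaps : ∀ W ∈ univ.filter (fun W : Submodule K M => W' ≤ W),
      finrank K ↥W ∈ Finset.Icc (finrank K ↥W') (finrank K M) := by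
    intro W hW
    simp only [mem_filter, mem_univ, true_and] at hW
    simp only [Finset.mem_Icc]
    exact ⟨Submodule.finrank_mono hW, Submodule.finrank_le W⟩
  have hstep : ∀ l ∈ Finset.Icc (finrank K ↥W') (finrank K M),
      (∑ W ∈ Finset.filter (fun W : Submodule K M => finrank K ↥W = l)
            (univ.filter (fun W : Submodule K M => W' ≤ W)),
        ((-1 : ℚ) ^ (finrank K M - l) * (Fintype.card K : ℚ) ^ ((finrank K M - l).choose 2)))
      = qB (Fintype.card K) (finrank K M - finrank K ↥W') (l - finrank K ↥W')
          * ((-1 : ℚ) ^ (finrank K M - l)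
              * (Fintype.card K : ℚ) ^ ((finrank K M - l).choose 2)) := by
    intro l hl
    simp only [Finset.mem_Icc] at hl
    rw [Finset.sum_const, nsmul_eq_mul, Finset.filter_filter, filter_card_eq_nat_card,
      card_ge_subspaces_rat W' rfl hl.1]
  calc ∑ W ∈ univ.filter (fun W : Submodule K M => W' ≤ W),
        ((-1 : ℚ) ^ (finrank K M - finrank K ↥W)
          * (Fintype.card K : ℚ) ^ ((finrank K M - finrank K ↥W).choose 2))
      = ∑ l ∈ Finset.Icc (finrank K ↥W') (finrank K M),
          ∑ W ∈ Finset.filter (fun W : Submodule K M => finrank K ↥W = l)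
            (univ.filter (fun W : Submodule K M => W' ≤ W)),
            ((-1 : ℚ) ^ (finrank K M - l)
              * (Fintype.card K : ℚ) ^ ((finrank K M - l).choose 2)) :=
        (Finset.sum_fiberwise_of_maps_to' hmaps
          (fun l => (-1 : ℚ) ^ (finrank K M - l)
            * (Fintype.card K : ℚ) ^ ((finrank K M - l).choose 2))).symm
    _ = ∑ l ∈ Finset.Icc (finrank K ↥W') (finrank K M),
          qB (Fintype.card K) (finrank K M - finrank K ↥W') (l - finrank K ↥W')
            * ((-1 : ℚ) ^ (finrank K M - l)
              * (Fintype.card K : ℚ) ^ ((finrank K M - l).choose 2)) :=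
        Finset.sum_congr rfl hstep
    _ = ∑ j ∈ range (finrank K M - finrank K ↥W' + 1),
          (-1 : ℚ) ^ j * (Fintype.card K : ℚ) ^ (j.choose 2)
            * qB (Fintype.card K) (finrank K M - finrank K ↥W') j := by
        apply Finset.sum_nbij' (i := fun l => finrank K M - l) (j := fun j => finrank K M - j)
        · intro l hl; simp only [Finset.mem_Icc] at hl; simp only [mem_range]; omega
        · intro j hj; simp only [mem_range] at hj; simp only [Finset.mem_Icc]; omega
        · intro l hl; simp only [Finset.mem_Icc] at hl; omega
        · intro j hj; simp only [mem_range] at hj; omega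
        · intro l hl
          simp only [Finset.mem_Icc] at hl
          have h1 : l - finrank K ↥W'
              = (finrank K M - finrank K ↥W') - (finrank K M - l) := by omega
          rw [h1, qB_symm (by omega)]
          ring
    _ = if finrank K M - finrank K ↥W' = 0 then 1 else 0 := qB_alt_sum hq _
    _ = if W' = ⊤ then 1 else 0 := by
        by_cases h : W' = ⊤
        · rw [if_pos h, if_pos]
          subst h
          rw [finrank_top]
          omega
        · rw [if_neg h, if_neg]
          intro hkw
          exact h (Submodule.eq_top_of_finrank_eq (by omega))

/-- Step A : subspaces of dimension `v` inside `W`, partitioned by the join with `U`. -/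
lemma join_partition (U : Submodule K M) (v : ℕ) (W : Submodule K M) (hUW : U ≤ W) :
    qB (Fintype.card K) (finrank K ↥W) v
      = ∑ W' ∈ univ.filter (fun W' : Submodule K M => U ≤ W' ∧ W' ≤ W),
          ((Nat.card {V : Submodule K M // finrank K ↥V = v ∧ U ⊔ V = W'} : ℚ)) := by
  have hcards : (univ.filter (fun V : Submodule K M => V ≤ W ∧ finrank K ↥V = v)).card
      = ∑ W' ∈ univ.filter (fun W' : Submodule K M => U ≤ W' ∧ W' ≤ W),
          (univ.filter (fun V : Submodule K M => finrank K ↥V = v ∧ U ⊔ V = W')).card := by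
    rw [Finset.card_eq_sum_card_fiberwise (f := fun V => U ⊔ V)
      (t := univ.filter (fun W' : Submodule K M => U ≤ W' ∧ W' ≤ W))]
    · apply Finset.sum_congr rfl
      intro W' hW'
      simp only [mem_filter, mem_univ, true_and] at hW'
      rw [Finset.filter_filter]
      congr 1
      apply Finset.filter_congr
      intro V _
      constructor
      · rintro ⟨⟨_, h2⟩, h3⟩; exact ⟨h2, h3⟩
      · rintro ⟨h2, h3⟩
        refine ⟨⟨?_, h2⟩, h3⟩
        calc V ≤ U ⊔ V := le_sup_right
        _ = W' := h3
        _ ≤ W := hW'.2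
    · intro V hV
      simp only [Finset.mem_coe, mem_filter, mem_univ, true_and] at hV ⊢
      exact ⟨le_sup_left, sup_le hUW hV.1⟩
  rw [← card_le_subspaces_rat W v, ← filter_card_eq_nat_card, hcards]
  push_cast
  apply Finset.sum_congr rfl
  intro W' _
  rw [filter_card_eq_nat_card]

/-- The master counting theorem for an abstract finite module. -/
theorem master (U : Submodule K M) (u : ℕ) (hu : finrank K ↥U = u) (v : ℕ) :
    (Nat.card {V : Submodule K M // finrank K ↥V = v ∧ U ⊔ V = ⊤} : ℚ)
      = ∑ l ∈ Finset.Icc u (finrank K M),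
          qB (Fintype.card K) (finrank K M - u) (l - u)
            * (-1) ^ (finrank K M - l) * (Fintype.card K : ℚ) ^ ((finrank K M - l).choose 2)
            * qB (Fintype.card K) l v := by
  have hq : (1:ℚ) < (Fintype.card K : ℚ) := one_lt_qcard
  have hmaps : ∀ W ∈ univ.filter (fun W : Submodule K M => U ≤ W),
      finrank K ↥W ∈ Finset.Icc u (finrank K M) := by
    intro W hW
    simp only [mem_filter, mem_univ, true_and] at hW
    simp only [Finset.mem_Icc]
    rw [← hu]
    exact ⟨Submodule.finrank_mono hW, Submodule.finrank_le W⟩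
  have step1 : ∀ l ∈ Finset.Icc u (finrank K M),
      qB (Fintype.card K) (finrank K M - u) (l - u)
          * (-1 : ℚ) ^ (finrank K M - l)
          * (Fintype.card K : ℚ) ^ ((finrank K M - l).choose 2)
          * qB (Fintype.card K) l v
        = ∑ W ∈ Finset.filter (fun W : Submodule K M => finrank K ↥W = l)
            (univ.filter (fun W : Submodule K M => U ≤ W)),
            ((-1 : ℚ) ^ (finrank K M - l) * (Fintype.card K : ℚ) ^ ((finrank K M - l).choose 2)
              * qB (Fintype.card K) l v) := by
    intro l hl
    simp only [Finset.mem_Icc] at hl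
    rw [Finset.sum_const, nsmul_eq_mul, Finset.filter_filter, filter_card_eq_nat_card,
      card_ge_subspaces_rat U hu hl.1]
    ring
  have step2 : ∀ W ∈ univ.filter (fun W : Submodule K M => U ≤ W),
      ((-1 : ℚ) ^ (finrank K M - finrank K ↥W)
          * (Fintype.card K : ℚ) ^ ((finrank K M - finrank K ↥W).choose 2)
          * qB (Fintype.card K) (finrank K ↥W) v)
        = ∑ W' ∈ univ.filter (fun W' : Submodule K M => U ≤ W' ∧ W' ≤ W),
            ((-1 : ℚ) ^ (finrank K M - finrank K ↥W)
              * (Fintype.card K : ℚ) ^ ((finrank K M - finrank K ↥W).choose 2)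
              * (Nat.card {V : Submodule K M // finrank K ↥V = v ∧ U ⊔ V = W'} : ℚ)) := by
    intro W hW
    simp only [mem_filter, mem_univ, true_and] at hW
    rw [join_partition U v W hW, Finset.mul_sum]
  have step3 : ∀ W' ∈ univ.filter (fun W' : Submodule K M => U ≤ W'),
      (∑ W ∈ univ.filter (fun W : Submodule K M => W' ≤ W),
          ((-1 : ℚ) ^ (finrank K M - finrank K ↥W)
            * (Fintype.card K : ℚ) ^ ((finrank K M - finrank K ↥W).choose 2)
            * (Nat.card {V : Submodule K M // finrank K ↥V = v ∧ U ⊔ V = W'} : ℚ)))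
        = if W' = ⊤
            then (Nat.card {V : Submodule K M // finrank K ↥V = v ∧ U ⊔ V = W'} : ℚ)
            else 0 := by
    intro W' _
    rw [← Finset.sum_mul, moebius_sum W', ite_mul, one_mul, zero_mul]
  symm
  calc ∑ l ∈ Finset.Icc u (finrank K M),
        qB (Fintype.card K) (finrank K M - u) (l - u)
          * (-1 : ℚ) ^ (finrank K M - l)
          * (Fintype.card K : ℚ) ^ ((finrank K M - l).choose 2)
          * qB (Fintype.card K) l v
      = ∑ l ∈ Finset.Icc u (finrank K M),
          ∑ W ∈ Finset.filter (fun W : Submodule K M => finrank K ↥W = l)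
            (univ.filter (fun W : Submodule K M => U ≤ W)),
            ((-1 : ℚ) ^ (finrank K M - l) * (Fintype.card K : ℚ) ^ ((finrank K M - l).choose 2)
              * qB (Fintype.card K) l v) := Finset.sum_congr rfl step1
    _ = ∑ W ∈ univ.filter (fun W : Submodule K M => U ≤ W),
          ((-1 : ℚ) ^ (finrank K M - finrank K ↥W)
            * (Fintype.card K : ℚ) ^ ((finrank K M - finrank K ↥W).choose 2)
            * qB (Fintype.card K) (finrank K ↥W) v) :=
        Finset.sum_fiberwise_of_maps_to' hmaps
          (fun l => (-1 : ℚ) ^ (finrank K M - l)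
            * (Fintype.card K : ℚ) ^ ((finrank K M - l).choose 2)
            * qB (Fintype.card K) l v)
    _ = ∑ W ∈ univ.filter (fun W : Submodule K M => U ≤ W),
          ∑ W' ∈ univ.filter (fun W' : Submodule K M => U ≤ W' ∧ W' ≤ W),
            ((-1 : ℚ) ^ (finrank K M - finrank K ↥W)
              * (Fintype.card K : ℚ) ^ ((finrank K M - finrank K ↥W).choose 2)
              * (Nat.card {V : Submodule K M // finrank K ↥V = v ∧ U ⊔ V = W'} : ℚ)) :=
        Finset.sum_congr rfl step2
    _ = ∑ W' ∈ univ.filter (fun W' : Submodule K M => U ≤ W'),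
          ∑ W ∈ univ.filter (fun W : Submodule K M => W' ≤ W),
            ((-1 : ℚ) ^ (finrank K M - finrank K ↥W)
              * (Fintype.card K : ℚ) ^ ((finrank K M - finrank K ↥W).choose 2)
              * (Nat.card {V : Submodule K M // finrank K ↥V = v ∧ U ⊔ V = W'} : ℚ)) := by
        apply Finset.sum_comm'
        intro W W'
        simp only [mem_filter, mem_univ, true_and]
        constructor
        · rintro ⟨h1, h2, h3⟩; exact ⟨h3, h2⟩
        · rintro ⟨h1, h2⟩; exact ⟨le_trans h2 h1, h2, h1⟩
    _ = ∑ W' ∈ univ.filter (fun W' : Submodule K M => U ≤ W'),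
          (if W' = ⊤
            then (Nat.card {V : Submodule K M // finrank K ↥V = v ∧ U ⊔ V = W'} : ℚ)
            else 0) := Finset.sum_congr rfl step3
    _ = (Nat.card {V : Submodule K M // finrank K ↥V = v ∧ U ⊔ V = ⊤} : ℚ) := by
        rw [Finset.sum_ite_eq' (univ.filter (fun W' : Submodule K M => U ≤ W')) ⊤
          (fun W' => (Nat.card {V : Submodule K M // finrank K ↥V = v ∧ U ⊔ V = W'} : ℚ))]
        rw [if_pos (by simp only [mem_filter, mem_univ, true_and]; exact le_top)]

end Main

section Final

lemma qbin_eq_qB {q : ℚ} (hq : 1 < q) (n j : ℕ) : qbin q (n : ℤ) (j : ℤ) = qB q n j := by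
  rcases le_or_gt j n with h | h
  · rw [qbin, if_pos ⟨by exact_mod_cast Nat.zero_le j, by exact_mod_cast h⟩, qB_eq_prod hq h]
    rw [show ((j : ℤ)).toNat = j from by omega]
    apply Finset.prod_congr rfl
    intro i hi
    simp only [Finset.mem_range] at hi
    rw [show ((n : ℤ) - (i : ℕ)).toNat = n - i from by omega,
      show ((j : ℤ) - (i : ℕ)).toNat = j - i from by omega]
  · rw [qbin, if_neg (by rintro ⟨h1, h2⟩; omega), qB_gt _ h]

end Final

theorem stmt_5 {K : Type*} [Field K] [Fintype K] (k : ℕ) (hk : 1 ≤ k)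
    (U : Submodule K (Fin k → K)) (u : ℕ) (hu : Module.finrank K U = u)
    (v : ℕ) (hv1 : k - u ≤ v) (hv2 : v ≤ k) :
    (Nat.card {V : Submodule K (Fin k → K) | Module.finrank K V = v ∧ U ⊔ V = ⊤} : ℚ)
      = ∑ l ∈ Finset.Icc u k,
          qbin (Fintype.card K : ℚ) ((k : ℤ) - (u : ℤ)) ((l : ℤ) - (u : ℤ))
            * (-1) ^ (k - l) * (Fintype.card K : ℚ) ^ ((k - l).choose 2)
            * qbin (Fintype.card K : ℚ) (l : ℤ) (v : ℤ) := by
  classical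
  have hq : (1:ℚ) < (Fintype.card K : ℚ) := one_lt_qcard (K := K)
  have hk' : Module.finrank K (Fin k → K) = k := by
    rw [Module.finrank_fintype_fun_eq_card, Fintype.card_fin]
  have hm := master (K := K) (M := Fin k → K) U u hu v
  rw [hk'] at hm
  have hset : Nat.card {V : Submodule K (Fin k → K) | Module.finrank K V = v ∧ U ⊔ V = ⊤}
      = Nat.card {V : Submodule K (Fin k → K) // Module.finrank K V = v ∧ U ⊔ V = ⊤} := rfl
  rw [hset, hm]
  apply Finset.sum_congr rfl
  intro l hl
  simp only [Finset.mem_Icc] at hl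
  rw [show (k : ℤ) - (u : ℤ) = ((k - u : ℕ) : ℤ) from by omega,
    show (l : ℤ) - (u : ℤ) = ((l - u : ℕ) : ℤ) from by omega,
    qbin_eq_qB hq, qbin_eq_qB hq]
end

section
/- Let $G \in \mathbb{F}_q^{k \times n}$ have rank $k$, let $g_1,\dots,g_n$ be its columns, and for $i \in [k]$, $0 \le s \le n$ set $\alpha_i(s) = |\{S \subseteq [n] : |S| = s,\ e_i \in \langle g_j : j \in S\rangle\}|$. If columns of $G$ are drawn independently and uniformly at random (with replacement) and $\tau_i(G)$ denotes the number of draws until $e_i$ lies in the span of the drawn columns, then $\mathbb{E}[\tau_i(G)] = n H_n - \sum_{s=1}^{n-1} \frac{\alpha_i(s)}{\binom{n-1}{s}}$. -/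
open MeasureTheory

/-! ### Auxiliary combinatorial identities -/

lemma keyNat : ∀ (s m p : ℕ),
    (∑ t ∈ Finset.range (s+1),
        s.choose t * ((t+m).factorial * ((s-t)+p).factorial)) * (m+p+1).factorial
      = (m+s+p+1).factorial * (m.factorial * p.factorial) := by
  intro s
  induction s with
  | zero =>
    intro m p
    simp [Nat.factorial]
    ring
  | succ s ih =>
    intro m p
    have hsplit : (∑ t ∈ Finset.range (s+2),
        (s+1).choose t * ((t+m).factorial * ((s+1-t)+p).factorial))
        = (∑ t ∈ Finset.range (s+1), s.choose t * ((t+m).factorial * ((s-t)+(p+1)).factorial))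
          + ∑ t ∈ Finset.range (s+1), s.choose t * ((t+(m+1)).factorial * ((s-t)+p).factorial) := by
      rw [Finset.sum_range_succ' (fun t => (s+1).choose t * ((t+m).factorial * ((s+1-t)+p).factorial))]
      have e1 : ∀ t ∈ Finset.range (s+1),
          (s+1).choose (t+1) * (((t+1)+m).factorial * ((s+1-(t+1))+p).factorial)
          = s.choose t * ((t+(m+1)).factorial * ((s-t)+p).factorial)
            + (fun t => s.choose t * ((t+m).factorial * ((s+1-t)+p).factorial)) (t+1) := by
        intro t ht
        simp only []
        have h1 : s+1-(t+1) = s - t := by omega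
        have h2 : (t+1)+m = t+(m+1) := by omega
        rw [h1, h2]
        rw [Nat.choose_succ_succ]
        ring
      rw [Finset.sum_congr rfl e1, Finset.sum_add_distrib]
      have e2 : (∑ t ∈ Finset.range (s+1),
            (fun t => s.choose t * ((t+m).factorial * ((s+1-t)+p).factorial)) (t+1))
          + (s+1).choose 0 * ((0+m).factorial * ((s+1-0)+p).factorial)
          = ∑ t ∈ Finset.range (s+1), s.choose t * ((t+m).factorial * ((s-t)+(p+1)).factorial) := by
        have h0 : (s+1).choose 0 * ((0+m).factorial * ((s+1-0)+p).factorial)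
            = (fun t => s.choose t * ((t+m).factorial * ((s+1-t)+p).factorial)) 0 := by
          simp
        rw [h0, ← Finset.sum_range_succ' (fun t => s.choose t * ((t+m).factorial * ((s+1-t)+p).factorial)) (s+1)]
        rw [Finset.sum_range_succ]
        simp only [Nat.choose_succ_self, zero_mul, add_zero]
        apply Finset.sum_congr rfl
        intro t ht
        have ht' : t ≤ s := by simp at ht; omega
        have h2 : (s+1-t)+p = (s-t)+(p+1) := by omega
        rw [h2]
      omega
    rw [hsplit]
    have hA := ih m (p+1)
    have hB := ih (m+1) p
    simp only [show m+(p+1)+1 = m+p+2 from by omega, show (m+1)+p+1 = m+p+2 from by omega,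
      show m+s+(p+1)+1 = m+s+p+2 from by omega, show (m+1)+s+p+1 = m+s+p+2 from by omega] at hA hB
    have egoal : m+(s+1)+p+1 = m+s+p+2 := by omega
    rw [egoal]
    apply Nat.eq_of_mul_eq_mul_right (show 0 < m+p+2 by omega)
    have hfac : (m+p+2).factorial = (m+p+2) * (m+p+1).factorial := Nat.factorial_succ (m+p+1)
    have lhs_eq : ((∑ t ∈ Finset.range (s+1), s.choose t * ((t+m).factorial * ((s-t)+(p+1)).factorial))
          + ∑ t ∈ Finset.range (s+1), s.choose t * ((t+(m+1)).factorial * ((s-t)+p).factorial))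
          * (m+p+1).factorial * (m+p+2)
        = (∑ t ∈ Finset.range (s+1), s.choose t * ((t+m).factorial * ((s-t)+(p+1)).factorial)) * (m+p+2).factorial
          + (∑ t ∈ Finset.range (s+1), s.choose t * ((t+(m+1)).factorial * ((s-t)+p).factorial)) * (m+p+2).factorial := by
      rw [hfac]; ring
    rw [lhs_eq, hA, hB, Nat.factorial_succ p, Nat.factorial_succ m]
    have : (p+1)+(m+1) = m+p+2 := by omega
    calc (m+s+p+2).factorial * (m.factorial * ((p+1) * p.factorial))
          + (m+s+p+2).factorial * ((m+1) * m.factorial * p.factorial)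
        = (m+s+p+2).factorial * (m.factorial * p.factorial) * ((p+1)+(m+1)) := by ring
      _ = (m+s+p+2).factorial * (m.factorial * p.factorial) * (m+p+2) := by rw [this]

noncomputable def vR (n s : ℕ) : ℝ :=
  (n : ℝ) * (s.factorial : ℝ) * ((n-1-s).factorial : ℝ) / (n.factorial : ℝ)

lemma vR_nonneg (n s : ℕ) : 0 ≤ vR n s := by
  unfold vR; positivity

lemma identityA (n s : ℕ) (hn : 0 < n) (hs : s ≤ n - 1) :
    ∑ t ∈ Finset.range (s+1), (s.choose t : ℝ) * vR n t = (n : ℝ) / ((n - s : ℕ) : ℝ) := by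
  have hSN : (∑ t ∈ Finset.range (s+1), s.choose t * (t.factorial * (n-1-t).factorial))
      * (n-s).factorial = n.factorial * (n-1-s).factorial := by
    have h := keyNat s 0 (n-1-s)
    have e1 : ∀ t ∈ Finset.range (s+1),
        s.choose t * ((t+0).factorial * ((s-t)+(n-1-s)).factorial)
        = s.choose t * (t.factorial * (n-1-t).factorial) := by
      intro t ht
      simp only [Finset.mem_range] at ht
      have : (s-t)+(n-1-s) = n-1-t := by omega
      rw [this, Nat.add_zero]
    rw [Finset.sum_congr rfl e1] at h
    have e2 : 0+(n-1-s)+1 = n-s := by omega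
    have e3 : 0+s+(n-1-s)+1 = n := by omega
    rw [e2, e3] at h
    simpa using h
  have hfs : ((n-s).factorial : ℝ) ≠ 0 := by positivity
  have hnf : ((n.factorial : ℕ) : ℝ) ≠ 0 := by positivity
  have hcast : (∑ t ∈ Finset.range (s+1), (s.choose t : ℝ) * (t.factorial * (n-1-t).factorial))
      * ((n-s).factorial : ℝ) = (n.factorial : ℝ) * ((n-1-s).factorial : ℝ) := by
    exact_mod_cast congrArg (Nat.cast : ℕ → ℝ) hSN
  have hsum : (∑ t ∈ Finset.range (s+1), (s.choose t : ℝ) * (t.factorial * (n-1-t).factorial))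
      = (n.factorial : ℝ) * ((n-1-s).factorial : ℝ) / ((n-s).factorial : ℝ) := by
    field_simp at hcast ⊢
    linarith [hcast]
  have expand : ∑ t ∈ Finset.range (s+1), (s.choose t : ℝ) * vR n t
      = (∑ t ∈ Finset.range (s+1), (s.choose t : ℝ) * (t.factorial * (n-1-t).factorial))
        * ((n:ℝ) / n.factorial) := by
    rw [Finset.sum_mul]
    apply Finset.sum_congr rfl
    intro t ht
    unfold vR
    ring
  rw [expand, hsum]
  have hfs2 : (n-s).factorial = (n-s) * (n-1-s).factorial := by
    have : n - s = (n-1-s)+1 := by omega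
    rw [this, Nat.factorial_succ]
  rw [hfs2]
  have h1 : ((n-1-s).factorial : ℝ) ≠ 0 := by positivity
  have h2 : ((n-s : ℕ) : ℝ) ≠ 0 := by
    have : 0 < n - s := by omega
    positivity
  push_cast
  field_simp

open scoped Classical in
noncomputable def cnt (n r : ℕ) (S : Finset (Fin n)) : ℕ :=
  (Finset.univ.filter (fun w : Fin r → Fin n => Finset.image w Finset.univ = S)).card

noncomputable def fE (n : ℕ) (S : Finset (Fin n)) : ENNReal :=
  ∑' r : ℕ, (cnt n r S : ENNReal) * (n : ENNReal)⁻¹ ^ r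

open scoped Classical in
lemma cnt_powerset (n r : ℕ) (S : Finset (Fin n)) :
    ∑ T ∈ S.powerset, cnt n r T = S.card ^ r := by
  have hcard : (Finset.univ.filter (fun w : Fin r → Fin n => Finset.image w Finset.univ ⊆ S)).card
      = ∑ T ∈ S.powerset, cnt n r T := by
    rw [Finset.card_eq_sum_card_fiberwise
      (f := fun w : Fin r → Fin n => Finset.image w Finset.univ) (t := S.powerset)
      (fun w hw => Finset.mem_coe.2 (Finset.mem_powerset.2 (Finset.mem_filter.1 (Finset.mem_coe.1 hw)).2))]
    apply Finset.sum_congr rfl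
    intro T hT
    unfold cnt
    congr 1
    ext w
    simp only [Finset.mem_filter, Finset.mem_univ, true_and]
    constructor
    · rintro ⟨-, h⟩; exact h
    · rintro h; exact ⟨h ▸ Finset.mem_powerset.1 hT, h⟩
  rw [← hcard]
  have : (Finset.univ.filter (fun w : Fin r → Fin n => Finset.image w Finset.univ ⊆ S))
      = Fintype.piFinset (fun _ : Fin r => S) := by
    ext w
    simp [Finset.image_subset_iff, Fintype.mem_piFinset]
  rw [this, Fintype.card_piFinset]
  simp

lemma geomE (n s : ℕ) (hs : s < n) :
    ∑' r : ℕ, (s : ENNReal) ^ r * (n : ENNReal)⁻¹ ^ r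
      = ENNReal.ofReal ((n : ℝ) / ((n - s : ℕ) : ℝ)) := by
  have hn : (0:ℝ) < n := by
    have : 0 < n := by omega
    exact_mod_cast this
  have hx0 : (0:ℝ) ≤ (s:ℝ)/n := by positivity
  have hx1 : (s:ℝ)/n < 1 := by
    rw [div_lt_one hn]; exact_mod_cast hs
  have hterm : ∀ r : ℕ, (s : ENNReal) ^ r * (n : ENNReal)⁻¹ ^ r
      = ENNReal.ofReal (((s:ℝ)/n) ^ r) := by
    intro r
    rw [← mul_pow, ENNReal.ofReal_pow hx0]
    congr 1
    rw [ENNReal.ofReal_div_of_pos hn, ENNReal.ofReal_natCast, ENNReal.ofReal_natCast,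
      div_eq_mul_inv]
  simp only [hterm]
  rw [← ENNReal.ofReal_tsum_of_nonneg (fun r => pow_nonneg hx0 r)
    (summable_geometric_of_lt_one hx0 hx1)]
  congr 1
  rw [tsum_geometric_of_lt_one hx0 hx1]
  have h1 : ((n - s : ℕ) : ℝ) = (n:ℝ) - s := by
    push_cast [Nat.cast_sub hs.le]; ring
  rw [h1]
  have h2 : (n:ℝ) - s ≠ 0 := by
    have : (s:ℝ) < n := by exact_mod_cast hs
    linarith
  field_simp

lemma sum_powerset_vR (n : ℕ) (hn : 0 < n) (S : Finset (Fin n)) (hS : S.card ≤ n - 1) :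
    ∑ T ∈ S.powerset, ENNReal.ofReal (vR n T.card)
      = ENNReal.ofReal ((n : ℝ) / ((n - S.card : ℕ) : ℝ)) := by
  rw [Finset.sum_powerset]
  have hinner : ∀ j ∈ Finset.range (S.card + 1),
      ∑ T ∈ Finset.powersetCard j S, ENNReal.ofReal (vR n T.card)
        = (S.card.choose j) * ENNReal.ofReal (vR n j) := by
    intro j hj
    have : ∀ T ∈ Finset.powersetCard j S, ENNReal.ofReal (vR n T.card) = ENNReal.ofReal (vR n j) := by
      intro T hT
      rw [(Finset.mem_powersetCard.1 hT).2]
    rw [Finset.sum_congr rfl this, Finset.sum_const, Finset.card_powersetCard, nsmul_eq_mul]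
  rw [Finset.sum_congr rfl hinner]
  have : ∀ j ∈ Finset.range (S.card + 1),
      (S.card.choose j : ENNReal) * ENNReal.ofReal (vR n j)
        = ENNReal.ofReal ((S.card.choose j : ℝ) * vR n j) := by
    intro j hj
    rw [ENNReal.ofReal_mul (by positivity), ENNReal.ofReal_natCast]
  rw [Finset.sum_congr rfl this, ← ENNReal.ofReal_sum_of_nonneg
    (fun j _ => by have := vR_nonneg n j; positivity)]
  rw [identityA n S.card hn hS]

lemma fE_eq (n : ℕ) (hn : 0 < n) : ∀ S : Finset (Fin n), S ≠ Finset.univ →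
    fE n S = ENNReal.ofReal (vR n S.card) := by
  intro S
  induction S using Finset.strongInduction with
  | _ S ih =>
    intro hS
    have hcard : S.card < n := by
      have := Finset.card_lt_card (Finset.ssubset_univ_iff.2 hS)
      simpa using this
    have hsumT : ∑ T ∈ S.powerset, fE n T
        = ∑' r : ℕ, (S.card : ENNReal) ^ r * (n : ENNReal)⁻¹ ^ r := by
      unfold fE
      rw [← Summable.tsum_finsetSum (fun i _ => ENNReal.summable)]
      congr 1
      funext r
      rw [← Finset.sum_mul]
      congr 1
      rw [← Nat.cast_sum, cnt_powerset]
      push_cast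
      ring
    have hv := sum_powerset_vR n hn S (by omega)
    have hgeom := geomE n S.card hcard
    have hkey : (∑ T ∈ S.powerset.erase S, fE n T) + fE n S
        = (∑ T ∈ S.powerset.erase S, ENNReal.ofReal (vR n T.card)) + ENNReal.ofReal (vR n S.card) := by
      rw [Finset.sum_erase_add _ _ (Finset.mem_powerset_self S),
        Finset.sum_erase_add _ _ (Finset.mem_powerset_self S)]
      rw [hsumT, hgeom, hv]
    have hsame : ∑ T ∈ S.powerset.erase S, fE n T
        = ∑ T ∈ S.powerset.erase S, ENNReal.ofReal (vR n T.card) := by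
      apply Finset.sum_congr rfl
      intro T hT
      have hT1 := Finset.mem_powerset.1 (Finset.mem_of_mem_erase hT)
      have hT2 := Finset.ne_of_mem_erase hT
      have hss : T ⊂ S := lt_of_le_of_ne hT1 hT2
      exact ih T hss (by
        intro h
        rw [h] at hss
        exact absurd (Finset.subset_univ S) (by simpa using hss.2))
    rw [hsame] at hkey
    have hfin : (∑ T ∈ S.powerset.erase S, ENNReal.ofReal (vR n T.card)) ≠ ⊤ :=
      (ENNReal.sum_lt_top.2 (fun T _ => ENNReal.ofReal_lt_top)).ne
    rw [add_comm _ (fE n S), add_comm _ (ENNReal.ofReal (vR n S.card))] at hkey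
    exact (ENNReal.add_left_inj hfin).1 hkey

section agg
open scoped Classical
variable {n : ℕ} (good : Finset (Fin n) → Prop)

lemma b_fiber (r : ℕ) :
    ((Finset.univ.filter (fun w : Fin r → Fin n => ¬ good (Finset.image w Finset.univ))).card
      = ∑ S ∈ Finset.univ.filter (fun S : Finset (Fin n) => ¬ good S), cnt n r S) := by
  rw [Finset.card_eq_sum_card_fiberwise (f := fun w : Fin r → Fin n => Finset.image w Finset.univ)
    (t := Finset.univ.filter (fun S => ¬ good S))
    (fun w hw => by
      simp only [Finset.mem_coe, Finset.mem_filter, Finset.mem_univ, true_and] at hw ⊢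
      exact hw)]
  apply Finset.sum_congr rfl
  intro S hS
  unfold cnt
  congr 1
  ext w
  simp only [Finset.mem_filter, Finset.mem_univ, true_and]
  have hSbad := (Finset.mem_filter.1 hS).2
  constructor
  · rintro ⟨-, h⟩; exact h
  · intro h; exact ⟨by rw [h]; exact hSbad, h⟩

lemma choose_mul_vR (n s : ℕ) (hs : s < n) :
    (n.choose s : ℝ) * vR n s = (n : ℝ) / ((n - s : ℕ) : ℝ) := by
  have h := Nat.choose_mul_factorial_mul_factorial hs.le
  have hc : (n.choose s : ℝ) * (s.factorial : ℝ) * ((n-s).factorial : ℝ) = (n.factorial : ℝ) := by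
    exact_mod_cast h
  have hfs2 : (n-s).factorial = (n-s) * (n-1-s).factorial := by
    have : n - s = (n-1-s)+1 := by omega
    rw [this, Nat.factorial_succ]
  rw [hfs2] at hc
  push_cast at hc
  unfold vR
  have h1 : ((n-1-s).factorial : ℝ) ≠ 0 := by positivity
  have h2 : ((n-s : ℕ) : ℝ) ≠ 0 := by
    have : 0 < n - s := by omega
    positivity
  have h3 : ((n.factorial : ℕ) : ℝ) ≠ 0 := by positivity
  push_cast at h2 ⊢
  field_simp
  nlinarith [hc]

lemma vR_inv_choose (n s : ℕ) (hs : s ≤ n - 1) (hn : 0 < n) :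
    vR n s = (((n-1).choose s : ℝ))⁻¹ := by
  have h := Nat.choose_mul_factorial_mul_factorial (n := n-1) (k := s) hs
  have hc : (((n-1).choose s : ℕ) : ℝ) * (s.factorial : ℝ) * ((n-1-s).factorial : ℝ)
      = ((n-1).factorial : ℝ) := by exact_mod_cast h
  have hnf : n.factorial = n * (n-1).factorial := by
    have : n = (n-1)+1 := by omega
    nth_rewrite 1 [this]
    rw [Nat.factorial_succ]
    congr 1
    omega
  unfold vR
  rw [hnf]
  push_cast
  have h1 : ((n-1).factorial : ℝ) ≠ 0 := by positivity
  have h2 : (((n-1).choose s : ℕ) : ℝ) ≠ 0 := by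
    have := Nat.choose_pos (n := n-1) (k := s) hs
    positivity
  have h3 : (n:ℝ) ≠ 0 := by positivity
  field_simp
  nlinarith [hc]

lemma etotal_eq (hn : 2 ≤ n) (hgu : good Finset.univ) (hge : ¬ good (∅ : Finset (Fin n))) :
    ∑ S ∈ Finset.univ.filter (fun S : Finset (Fin n) => ¬ good S), vR n S.card
      = (n : ℝ) * (∑ m ∈ Finset.Icc 1 n, (1 : ℝ) / (m : ℝ))
        - ∑ s ∈ Finset.Icc 1 (n - 1),
            ((Finset.univ.filter (fun S : Finset (Fin n) => S.card = s ∧ good S)).card : ℝ)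
              / (((n - 1).choose s : ℝ)) := by
  set badF := Finset.univ.filter (fun S : Finset (Fin n) => ¬ good S) with hbadF
  have hmaps : ∀ S ∈ badF, S.card ∈ Finset.range n := by
    intro S hS
    simp only [Finset.mem_range]
    rcases lt_or_eq_of_le (Finset.card_le_univ S) with h | h
    · simpa using h
    · exfalso
      have : S = Finset.univ := Finset.eq_univ_of_card S (by simpa using h)
      rw [this] at hS
      exact (Finset.mem_filter.1 hS).2 hgu
  have step1 : ∑ S ∈ badF, vR n S.card
      = ∑ s ∈ Finset.range n, ((badF.filter (fun S => S.card = s)).card : ℝ) * vR n s := by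
    rw [← Finset.sum_fiberwise_of_maps_to hmaps (fun S => vR n S.card)]
    apply Finset.sum_congr rfl
    intro s _
    rw [Finset.sum_congr rfl (fun S hS => by rw [(Finset.mem_filter.1 hS).2]),
      Finset.sum_const, nsmul_eq_mul]
  have step2 : ∀ s, s < n → ((badF.filter (fun S => S.card = s)).card : ℝ)
      = (n.choose s : ℝ)
        - ((Finset.univ.filter (fun S : Finset (Fin n) => S.card = s ∧ good S)).card : ℝ) := by
    intro s hs
    have base_eq : (Finset.univ.filter (fun S : Finset (Fin n) => S.card = s))
        = Finset.powersetCard s Finset.univ := by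
      ext T
      simp [Finset.mem_powersetCard, Finset.subset_univ]
    have hbase : (Finset.univ.filter (fun S : Finset (Fin n) => S.card = s)).card = n.choose s := by
      rw [base_eq, Finset.card_powersetCard]
      simp
    have hsplit := Finset.card_filter_add_card_filter_not
      (s := Finset.univ.filter (fun S : Finset (Fin n) => S.card = s)) (p := good)
    have e1 : (Finset.univ.filter (fun S : Finset (Fin n) => S.card = s)).filter good
        = Finset.univ.filter (fun S : Finset (Fin n) => S.card = s ∧ good S) := by
      rw [Finset.filter_filter]
    have e2 : (Finset.univ.filter (fun S : Finset (Fin n) => S.card = s)).filter (fun S => ¬ good S)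
        = badF.filter (fun S => S.card = s) := by
      rw [Finset.filter_filter, hbadF, Finset.filter_filter]
      apply Finset.filter_congr
      intro S _
      tauto
    rw [e1, e2, hbase] at hsplit
    have := congrArg (fun x : ℕ => (x : ℝ)) hsplit
    push_cast at this
    linarith
  rw [step1, Finset.sum_congr rfl (fun s hs => by
    rw [step2 s (Finset.mem_range.1 hs), sub_mul])]
  rw [Finset.sum_sub_distrib]
  congr 1
  · -- harmonic part
    rw [Finset.sum_congr rfl (fun s hs => choose_mul_vR n s (Finset.mem_range.1 hs))]
    rw [← Finset.sum_range_reflect (fun s => (n:ℝ) / ((n - s : ℕ) : ℝ)) n]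
    rw [Finset.mul_sum]
    rw [← Finset.Ico_add_one_right_eq_Icc, Finset.sum_Ico_eq_sum_range]
    apply Finset.sum_congr rfl
    intro j hj
    simp only [Finset.mem_range] at hj
    have e : n - (n - 1 - j) = j + 1 := by omega
    rw [e]
    have e2 : 1 + j = j + 1 := by omega
    rw [e2]
    push_cast
    ring
  · -- alpha part
    have hrw : ∀ s ∈ Finset.range n,
        ((Finset.univ.filter (fun S : Finset (Fin n) => S.card = s ∧ good S)).card : ℝ) * vR n s
        = ((Finset.univ.filter (fun S : Finset (Fin n) => S.card = s ∧ good S)).card : ℝ)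
            / (((n - 1).choose s : ℝ)) := by
      intro s hs
      simp only [Finset.mem_range] at hs
      rw [vR_inv_choose n s (by omega) (by omega)]
      rw [div_eq_mul_inv]
    rw [Finset.sum_congr rfl hrw]
    have hn1 : Finset.range n = Finset.range ((n-1)+1) := by congr 1; omega
    rw [hn1, Finset.sum_range_succ' _ (n-1)]
    have hzero : ((Finset.univ.filter (fun S : Finset (Fin n) => S.card = 0 ∧ good S)).card : ℝ)
        / (((n - 1).choose 0 : ℝ)) = 0 := by
      have : (Finset.univ.filter (fun S : Finset (Fin n) => S.card = 0 ∧ good S)) = ∅ := by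
        apply Finset.filter_false_of_mem
        intro S _
        rintro ⟨h0, hg⟩
        rw [Finset.card_eq_zero.1 h0] at hg
        exact hge hg
      rw [this]
      simp
    rw [hzero, add_zero]
    rw [← Finset.Ico_add_one_right_eq_Icc, Finset.sum_Ico_eq_sum_range]
    apply Finset.sum_congr rfl
    intro j hj
    rw [show (1:ℕ)+j = j+1 from by omega]
end agg

section meas
variable {n : ℕ} (μ : Measure (ℕ → Fin n))

lemma cyl_measurable (r : ℕ) (c : ℕ → Fin n) :
    MeasurableSet {ω : ℕ → Fin n | ∀ j < r, ω j = c j} := by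
  have : {ω : ℕ → Fin n | ∀ j < r, ω j = c j}
      = ⋂ j ∈ Set.Iio r, (fun ω : ℕ → Fin n => ω j) ⁻¹' {c j} := by
    ext ω; simp
  rw [this]
  exact MeasurableSet.biInter (Set.to_countable _)
    (fun j _ => (measurable_pi_apply j) (measurableSet_singleton _))

open scoped Classical in
lemma restr_event (hn : 0 < n)
    (hiid : ∀ (r : ℕ) (s : ℕ → Fin n),
      μ {ω | ∀ j < r, ω j = s j} = ((n : ENNReal))⁻¹ ^ r)
    (r : ℕ) (P : (Fin r → Fin n) → Prop) [DecidablePred P] :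
    MeasurableSet {ω : ℕ → Fin n | P (fun j => ω j)} ∧
      μ {ω : ℕ → Fin n | P (fun j => ω j)}
        = ((Finset.univ.filter P).card : ENNReal) * ((n : ENNReal))⁻¹ ^ r := by
  set ext : (Fin r → Fin n) → ℕ → Fin n :=
    fun w j => if h : j < r then w ⟨j, h⟩ else ⟨0, hn⟩ with hext
  have hcyl : ∀ w : Fin r → Fin n,
      ((fun ω : ℕ → Fin n => (fun j : Fin r => ω j)) ⁻¹' {w})
        = {ω : ℕ → Fin n | ∀ j < r, ω j = ext w j} := by
    intro w
    ext ω
    simp only [Set.mem_preimage, Set.mem_singleton_iff, Set.mem_setOf_eq]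
    constructor
    · intro h j hj
      rw [hext]
      simp only [hj, dif_pos]
      exact congrFun h ⟨j, hj⟩
    · intro h
      funext j
      have := h j.1 j.2
      rw [hext] at this
      simpa [j.2] using this
  have hset : {ω : ℕ → Fin n | P (fun j => ω j)}
      = ⋃ w ∈ Finset.univ.filter P, ((fun ω : ℕ → Fin n => (fun j : Fin r => ω j)) ⁻¹' {w}) := by
    ext ω
    simp only [Set.mem_setOf_eq, Set.mem_iUnion, Finset.mem_filter, Finset.mem_univ, true_and,
      Set.mem_preimage, Set.mem_singleton_iff]
    constructor
    · intro h
      exact ⟨_, h, rfl⟩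
    · rintro ⟨w, hw, hwe⟩
      rw [hwe]; exact hw
  have hmeas : ∀ w : Fin r → Fin n,
      MeasurableSet ((fun ω : ℕ → Fin n => (fun j : Fin r => ω j)) ⁻¹' {w}) := by
    intro w
    rw [hcyl w]
    exact cyl_measurable r (ext w)
  constructor
  · rw [hset]
    exact (Finset.univ.filter P).measurableSet_biUnion (fun w _ => hmeas w)
  · rw [hset, measure_biUnion_finset ?_ (fun w _ => hmeas w)]
    · rw [Finset.sum_congr rfl (fun w _ => by rw [hcyl w, hiid r (ext w)])]
      rw [Finset.sum_const, nsmul_eq_mul]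
    · intro w hw w' hw' hne
      simp only [Function.onFun]
      apply Set.disjoint_left.2
      intro ω hωw hωw'
      apply hne
      rw [← hωw, ← hωw']
end meas

open scoped Classical in
theorem stmt_10' {K : Type*} [Field K] [Fintype K] (k n : ℕ) (hk : 2 ≤ k) (hkn : k ≤ n)
    (G : Matrix (Fin k) (Fin n) K) (hG : G.rank = k)
    (μ : Measure (ℕ → Fin n)) [IsProbabilityMeasure μ]
    (hiid : ∀ (r : ℕ) (s : ℕ → Fin n),
      μ {ω | ∀ j < r, ω j = s j} = ((n : ENNReal))⁻¹ ^ r)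
    (i : Fin k) :
    (∫ ω, ((sInf {r : ℕ | Pi.single i (1 : K) ∈
          Submodule.span K ((fun j (a : Fin k) => G a (ω j)) '' Set.Iio r)} : ℕ) : ℝ) ∂μ)
      = (n : ℝ) * (∑ m ∈ Finset.Icc 1 n, (1 : ℝ) / (m : ℝ))
        - ∑ s ∈ Finset.Icc 1 (n - 1),
            (Nat.card {S : Finset (Fin n) | S.card = s ∧ Pi.single i (1 : K) ∈
                Submodule.span K ((fun j (a : Fin k) => G a j) '' (S : Set (Fin n)))} : ℝ)
              / (((n - 1).choose s : ℝ)) := by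
  have hn2 : 2 ≤ n := hk.trans hkn
  have hn : 0 < n := by omega
  set col : Fin n → (Fin k → K) := fun j (a : Fin k) => G a j with hcol
  set good : Finset (Fin n) → Prop :=
    fun S => Pi.single i (1 : K) ∈ Submodule.span K (col '' (S : Set (Fin n))) with hgood
  set g : ℕ → (ℕ → Fin n) → Prop := fun r ω => Pi.single i (1 : K) ∈
    Submodule.span K ((fun j (a : Fin k) => G a (ω j)) '' Set.Iio r) with hg
  set τ : (ℕ → Fin n) → ℕ := fun ω => sInf {r | g r ω} with hτ
  -- bridge between g and good of the image finset
  have hbridge : ∀ (r : ℕ) (ω : ℕ → Fin n),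
      g r ω ↔ good (Finset.image (fun j : Fin r => ω j) Finset.univ) := by
    intro r ω
    have hIio : Set.Iio r = Set.range (Fin.val : Fin r → ℕ) := by
      ext x
      simp only [Set.mem_Iio, Set.mem_range]
      constructor
      · intro hx; exact ⟨⟨x, hx⟩, rfl⟩
      · rintro ⟨⟨y, hy⟩, rfl⟩; exact hy
    have hseteq : ((fun j (a : Fin k) => G a (ω j)) '' Set.Iio r)
        = col '' ((Finset.image (fun j : Fin r => ω j) Finset.univ : Finset (Fin n)) : Set (Fin n)) := by
      rw [Finset.coe_image, Finset.coe_univ, Set.image_univ]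
      rw [← Set.range_comp]
      have hfun : (fun j (a : Fin k) => G a (ω j)) = col ∘ ω := rfl
      rw [hfun, Set.image_comp, hIio, ← Set.range_comp]
      rw [← Set.range_comp]
      rfl
    show Pi.single i (1 : K) ∈
        Submodule.span K ((fun j (a : Fin k) => G a (ω j)) '' Set.Iio r)
      ↔ Pi.single i (1 : K) ∈ Submodule.span K
          (col '' ((Finset.image (fun j : Fin r => ω j) Finset.univ : Finset (Fin n)) : Set (Fin n)))
    rw [hseteq]
  -- monotonicity
  have hmono : ∀ (ω : ℕ → Fin n) (r r' : ℕ), r ≤ r' → g r ω → g r' ω := by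
    intro ω r r' hrr hgr
    rw [hg] at hgr ⊢
    exact Submodule.span_mono (Set.image_mono (Set.Iio_subset_Iio hrr)) hgr
  have hg0 : ∀ ω, ¬ g 0 ω := by
    intro ω hg0
    rw [hg] at hg0
    have : Set.Iio (0:ℕ) = ∅ := by ext x; simp
    rw [this, Set.image_empty, Submodule.span_empty, Submodule.mem_bot] at hg0
    have := congrFun hg0 i
    simp [Pi.single_eq_same] at this
  -- events
  set E : ℕ → Set (ℕ → Fin n) :=
    fun r => {ω | ¬ good (Finset.image (fun j : Fin r => ω j) Finset.univ)} with hE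
  have hEr := fun r => restr_event μ hn hiid r
    (fun w : Fin r → Fin n => ¬ good (Finset.image w Finset.univ))
  have hEmeas : ∀ r, MeasurableSet (E r) := fun r => (hEr r).1
  have hEmeasure := fun r => (hEr r).2
  set N : Set (ℕ → Fin n) := ⋂ r, E r with hN
  have hNmeas : MeasurableSet N := MeasurableSet.iInter (fun r => hEmeas r)
  have hmemE : ∀ r ω, ω ∈ E r ↔ ¬ g r ω := by
    intro r ω
    rw [hE]
    simp only [Set.mem_setOf_eq]
    rw [hbridge]
  have hmemN : ∀ ω, ω ∈ N ↔ ∀ r, ¬ g r ω := by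
    intro ω
    rw [hN]
    simp only [Set.mem_iInter]
    exact forall_congr' (fun r => hmemE r ω)
  -- good univ
  have hgu : good Finset.univ := by
    show Pi.single i (1 : K) ∈
      Submodule.span K (col '' ((Finset.univ : Finset (Fin n)) : Set (Fin n)))
    have hcoe : (col '' ((Finset.univ : Finset (Fin n)) : Set (Fin n))) = Set.range G.col := by
      rw [Finset.coe_univ, Set.image_univ]
      congr 1
    rw [hcoe, ← Matrix.range_mulVecLin]
    have htop : LinearMap.range G.mulVecLin = ⊤ := by
      apply Submodule.eq_top_of_finrank_eq
      rw [show Module.finrank K ↥(LinearMap.range G.mulVecLin) = G.rank from rfl, hG]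
      simp [Module.finrank_fin_fun]
    rw [htop]
    trivial
  have hge : ¬ good (∅ : Finset (Fin n)) := by
    intro h
    have h' : Pi.single i (1 : K) ∈
        Submodule.span K (col '' ((∅ : Finset (Fin n)) : Set (Fin n))) := h
    rw [Finset.coe_empty, Set.image_empty, Submodule.span_empty, Submodule.mem_bot] at h'
    have := congrFun h' i
    simp [Pi.single_eq_same] at this
  -- tau > r characterization
  have htau_gt : ∀ r ω, r < τ ω ↔ (ω ∈ E r ∧ ω ∉ N) := by
    intro r ω
    rw [hmemE]
    have hτω : τ ω = sInf {r' | g r' ω} := rfl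
    rw [hτω]
    constructor
    · intro h
      have hne : {r' | g r' ω}.Nonempty := by
        by_contra hempty
        rw [Set.not_nonempty_iff_eq_empty] at hempty
        rw [hempty, Nat.sInf_empty] at h
        omega
      constructor
      · intro hgr
        have hle := Nat.sInf_le (show r ∈ {r' | g r' ω} from hgr)
        omega
      · rw [hmemN]
        push_neg
        exact hne
    · rintro ⟨hgr, hωN⟩
      rw [hmemN] at hωN
      push_neg at hωN
      have hne : {r' | g r' ω}.Nonempty := hωN
      have hmem := Nat.sInf_mem hne
      by_contra hcon
      push_neg at hcon
      exact hgr (hmono ω _ r hcon hmem)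
  have hset_gt : ∀ r, {ω | r < τ ω} = E r \ N := by
    intro r
    ext ω
    rw [Set.mem_setOf_eq, htau_gt r ω, Set.mem_diff]
  -- total mass
  set badF := Finset.univ.filter (fun S : Finset (Fin n) => ¬ good S) with hbadF
  set Etot : ℝ := ∑ S ∈ badF, vR n S.card with hEtot
  have hEtot_nonneg : 0 ≤ Etot := Finset.sum_nonneg (fun S _ => vR_nonneg n S.card)
  have htsumE : ∑' r : ℕ, μ (E r) = ENNReal.ofReal Etot := by
    have h1 : ∀ r : ℕ, μ (E r) = ∑ S ∈ badF, (cnt n r S : ENNReal) * ((n : ENNReal))⁻¹ ^ r := by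
      intro r
      rw [hEmeasure r]
      rw [b_fiber good r]
      rw [Nat.cast_sum, Finset.sum_mul]
    simp only [h1]
    rw [Summable.tsum_finsetSum (fun S _ => ENNReal.summable)]
    have h2 : ∀ S ∈ badF, (∑' r : ℕ, (cnt n r S : ENNReal) * ((n : ENNReal))⁻¹ ^ r)
        = ENNReal.ofReal (vR n S.card) := by
      intro S hS
      have hSne : S ≠ Finset.univ := by
        intro h
        have := (Finset.mem_filter.1 hS).2
        rw [h] at this
        exact this hgu
      exact fE_eq n hn S hSne
    rw [Finset.sum_congr rfl h2]
    rw [← ENNReal.ofReal_sum_of_nonneg (fun S _ => vR_nonneg n S.card)]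
  -- null set
  have hNnull : μ N = 0 := by
    have htends : Filter.Tendsto (fun r => μ (E r)) Filter.atTop (nhds 0) := by
      apply ENNReal.tendsto_atTop_zero_of_tsum_ne_top
      rw [htsumE]
      exact ENNReal.ofReal_ne_top
    have hle : ∀ r, μ N ≤ μ (E r) := fun r => measure_mono (Set.iInter_subset E r)
    have := ge_of_tendsto htends (Filter.Eventually.of_forall hle)
    simpa using this
  -- measurability of tau
  have hτmeas : Measurable τ := by
    apply measurable_to_countable'
    intro m
    match m with
    | 0 =>
      have : τ ⁻¹' {0} = N := by
        ext ω
        simp only [Set.mem_preimage, Set.mem_singleton_iff]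
        rw [hmemN]
        have hτω : τ ω = sInf {r' | g r' ω} := rfl
        rw [hτω]
        constructor
        · intro h
          rcases Nat.sInf_eq_zero.1 h with h0 | hempty
          · exact absurd h0 (hg0 ω)
          · intro r hr
            have : r ∈ {r' | g r' ω} := hr
            rw [hempty] at this
            exact this
        · intro h
          apply Nat.sInf_eq_zero.2
          right
          ext r
          simp only [Set.mem_setOf_eq, Set.mem_empty_iff_false, iff_false]
          exact h r
      rw [this]
      exact hNmeas
    | m+1 =>
      have : τ ⁻¹' {m+1} = E m ∩ (E (m+1))ᶜ := by
        ext ω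
        simp only [Set.mem_preimage, Set.mem_singleton_iff, Set.mem_inter_iff, Set.mem_compl_iff]
        rw [hmemE, hmemE]
        have hτω : τ ω = sInf {r' | g r' ω} := rfl
        rw [hτω]
        simp only [not_not]
        constructor
        · intro h
          have hne : {r' | g r' ω}.Nonempty := by
            by_contra hempty
            rw [Set.not_nonempty_iff_eq_empty] at hempty
            rw [hempty, Nat.sInf_empty] at h
            omega
          have hmem := Nat.sInf_mem hne
          rw [h] at hmem
          refine ⟨?_, hmem⟩
          intro hgm
          have := Nat.sInf_le (show m ∈ {r' | g r' ω} from hgm)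
          omega
        · rintro ⟨hgm, hgm1⟩
          have hne : {r' | g r' ω}.Nonempty := ⟨m+1, hgm1⟩
          have hle : sInf {r' | g r' ω} ≤ m+1 :=
            Nat.sInf_le (show m+1 ∈ {r' | g r' ω} from hgm1)
          have hmem := Nat.sInf_mem hne
          have hgt : m < sInf {r' | g r' ω} := by
            by_contra hcon
            push_neg at hcon
            exact hgm (hmono ω _ m hcon hmem)
          omega
      rw [this]
      exact (hEmeas m).inter (hEmeas (m+1)).compl
  -- layer cake
  have hlayer : ∫⁻ ω, (τ ω : ENNReal) ∂μ = ∑' r : ℕ, μ {ω | r < τ ω} := by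
    have hpt : ∀ ω, ((τ ω : ℕ) : ENNReal)
        = ∑' r : ℕ, Set.indicator {ω' | r < τ ω'} (fun _ => (1:ENNReal)) ω := by
      intro ω
      have hterm : ∀ r : ℕ, Set.indicator {ω' | r < τ ω'} (fun _ => (1:ENNReal)) ω
          = if r < τ ω then 1 else 0 := by
        intro r
        rw [Set.indicator_apply]
        simp only [Set.mem_setOf_eq]
      simp only [hterm]
      rw [tsum_eq_sum (s := Finset.range (τ ω))
        (fun r hr => by
          simp only [Finset.mem_range, not_lt] at hr
          simp [Nat.not_lt.2 hr])]
      have hc : ∀ r ∈ Finset.range (τ ω), (if r < τ ω then (1:ENNReal) else 0) = 1 := by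
        intro r hr
        simp [Finset.mem_range.1 hr]
      rw [Finset.sum_congr rfl hc, Finset.sum_const, Finset.card_range, nsmul_eq_mul, mul_one]
    rw [lintegral_congr hpt]
    rw [lintegral_tsum (fun r => ((measurable_const).indicator
      (by rw [hset_gt r]; exact (hEmeas r).diff hNmeas)).aemeasurable)]
    congr 1
    funext r
    exact lintegral_indicator_one (by rw [hset_gt r]; exact (hEmeas r).diff hNmeas)
  have hmeasure_gt : ∀ r : ℕ, μ {ω | r < τ ω} = μ (E r) := by
    intro r
    rw [hset_gt r]
    exact measure_diff_null hNnull
  have hlintegral : ∫⁻ ω, (τ ω : ENNReal) ∂μ = ENNReal.ofReal Etot := by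
    rw [hlayer]
    simp only [hmeasure_gt]
    exact htsumE
  -- from Bochner to lintegral
  have hint : (∫ ω, ((τ ω : ℕ) : ℝ) ∂μ) = Etot := by
    rw [integral_eq_lintegral_of_nonneg_ae (Filter.Eventually.of_forall (fun ω => Nat.cast_nonneg _))
      ((measurable_from_top.comp hτmeas).aestronglyMeasurable)]
    have : ∀ ω, ENNReal.ofReal ((τ ω : ℕ) : ℝ) = ((τ ω : ℕ) : ENNReal) := by
      intro ω
      exact ENNReal.ofReal_natCast _
    simp only [this]
    rw [hlintegral]
    exact ENNReal.toReal_ofReal hEtot_nonneg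
  -- identify the integrand
  have hintegrand : (∫ ω, ((sInf {r : ℕ | Pi.single i (1 : K) ∈
          Submodule.span K ((fun j (a : Fin k) => G a (ω j)) '' Set.Iio r)} : ℕ) : ℝ) ∂μ)
      = ∫ ω, ((τ ω : ℕ) : ℝ) ∂μ := rfl
  rw [hintegrand, hint, hEtot, etotal_eq good hn2 hgu hge]
  congr 1
  apply Finset.sum_congr rfl
  intro s hs
  congr 1
  -- Nat.card = filter card
  rw [Nat.card_eq_fintype_card, Fintype.card_subtype]
  norm_num
  convert rfl


theorem stmt_10 {K : Type*} [Field K] [Fintype K] (k n : ℕ) (hk : 2 ≤ k) (hkn : k ≤ n)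
    (G : Matrix (Fin k) (Fin n) K) (hG : G.rank = k)
    (μ : Measure (ℕ → Fin n)) [IsProbabilityMeasure μ]
    (hiid : ∀ (r : ℕ) (s : ℕ → Fin n),
      μ {ω | ∀ j < r, ω j = s j} = ((n : ENNReal))⁻¹ ^ r)
    (i : Fin k) :
    (∫ ω, ((sInf {r : ℕ | Pi.single i (1 : K) ∈
          Submodule.span K ((fun j (a : Fin k) => G a (ω j)) '' Set.Iio r)} : ℕ) : ℝ) ∂μ)
      = (n : ℝ) * (∑ m ∈ Finset.Icc 1 n, (1 : ℝ) / (m : ℝ))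
        - ∑ s ∈ Finset.Icc 1 (n - 1),
            (Nat.card {S : Finset (Fin n) | S.card = s ∧ Pi.single i (1 : K) ∈
                Submodule.span K ((fun j (a : Fin k) => G a j) '' (S : Set (Fin n)))} : ℝ)
              / (((n - 1).choose s : ℝ)) := by
  exact stmt_10' k n hk hkn G hG μ hiid i
end

section
/- Let $G \in \mathbb{F}_q^{k \times n}$ be a systematic MDS matrix and fix $i \in [k]$. Then for $1 \le s \le k-1$ the number of $s$-subsets $S \subseteq [n]$ whose indexed columns span a subspace containing $e_i$ equals $\binom{n-1}{s-1}$, and for $k \le s \le n$ it equals $\binom{n}{s}$. -/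
theorem stmt_12 {K : Type*} [Field K] [Fintype K] (k n : ℕ) (hk : 2 ≤ k) (hkn : k ≤ n)
    (G : Matrix (Fin k) (Fin n) K)
    (hsys : ∀ j : Fin k, (fun a : Fin k => G a (Fin.castLE hkn j)) = Pi.single j 1)
    (hmds : ∀ S : Finset (Fin n), S.card = k →
      LinearIndependent K (fun j : S => fun a : Fin k => G a (j : Fin n)))
    (i : Fin k) :
    (∀ s : ℕ, 1 ≤ s → s ≤ k - 1 →
      Nat.card {S : Finset (Fin n) | S.card = s ∧ Pi.single i (1 : K) ∈
          Submodule.span K ((fun j (a : Fin k) => G a j) '' (S : Set (Fin n)))}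
        = (n - 1).choose (s - 1))
    ∧ (∀ s : ℕ, k ≤ s → s ≤ n →
      Nat.card {S : Finset (Fin n) | S.card = s ∧ Pi.single i (1 : K) ∈
          Submodule.span K ((fun j (a : Fin k) => G a j) '' (S : Set (Fin n)))}
        = n.choose s) := by
  classical
  set f : Fin n → Fin k → K := fun j a => G a j with hf
  set i' : Fin n := Fin.castLE hkn i with hi'
  -- columns indexed by any set of size ≤ k are linearly independent
  have hindep : ∀ T : Finset (Fin n), T.card ≤ k →
      LinearIndependent K (fun j : T => f j) := by
    intro T hT
    obtain ⟨S, hTS, -, hScard⟩ := Finset.exists_subsuperset_card_eq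
      (T.subset_univ) hT (by simpa using hkn)
    have hli := hmds S hScard
    have h2 := hli.comp (fun x : T => (⟨x.1, hTS x.2⟩ : S))
      (by intro a b hab; simp only [Subtype.mk.injEq] at hab; exact Subtype.ext hab)
    exact h2
  -- for |S| ≥ k the span is everything
  have hspan_top : ∀ S : Finset (Fin n), k ≤ S.card →
      Pi.single i (1 : K) ∈ Submodule.span K (f '' (S : Set (Fin n))) := by
    intro S hS
    obtain ⟨T, hTS, hT⟩ := Finset.exists_subset_card_eq hS
    have hli := hindep T hT.le
    have hcard : Fintype.card T = Module.finrank K (Fin k → K) := by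
      simp [hT, Module.finrank_pi]
    have htop := hli.span_eq_top_of_card_eq_finrank' hcard
    have hmem : Pi.single i (1 : K) ∈
        Submodule.span K (Set.range fun j : T => f j) := by
      rw [htop]; trivial
    have hr : Set.range (fun j : T => f j) = f '' (T : Set (Fin n)) := by
      ext y; constructor
      · rintro ⟨x, rfl⟩; exact ⟨x.1, x.2, rfl⟩
      · rintro ⟨x, hx, rfl⟩; exact ⟨⟨x, hx⟩, rfl⟩
    rw [hr] at hmem
    exact Submodule.span_mono (Set.image_mono hTS) hmem
  -- characterization for small sets
  have hchar : ∀ S : Finset (Fin n), S.card ≤ k - 1 →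
      (Pi.single i (1 : K) ∈ Submodule.span K (f '' (S : Set (Fin n))) ↔ i' ∈ S) := by
    intro S hS
    constructor
    · intro hmem
      by_contra hni
      have hTcard : (insert i' S).card ≤ k := by
        rw [Finset.card_insert_of_notMem hni]; omega
      have hli := hindep (insert i' S) hTcard
      have hx : (⟨i', Finset.mem_insert_self _ _⟩ : (insert i' S : Finset (Fin n)))
          ∉ {x : (insert i' S : Finset (Fin n)) | (x : Fin n) ∈ S} := by
        simpa using hni
      have hnot := hli.notMem_span_image hx
      apply hnot
      have himg : (fun j : (insert i' S : Finset (Fin n)) => f j) ''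
          {x : (insert i' S : Finset (Fin n)) | (x : Fin n) ∈ S}
          = f '' (S : Set (Fin n)) := by
        ext y; constructor
        · rintro ⟨⟨x, hxT⟩, hxS, rfl⟩; exact ⟨x, hxS, rfl⟩
        · rintro ⟨x, hxS, rfl⟩
          exact ⟨⟨x, Finset.mem_insert_of_mem hxS⟩, hxS, rfl⟩
      rw [himg]
      have hcol : f i' = Pi.single i 1 := hsys i
      show f i' ∈ _
      rw [hcol]
      exact hmem
    · intro hi
      have hmem : f i' ∈ f '' (S : Set (Fin n)) := ⟨i', hi, rfl⟩
      have := Submodule.subset_span (R := K) hmem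
      rwa [show f i' = Pi.single i 1 from hsys i] at this
  constructor
  · intro s hs1 hs2
    have hset : {S : Finset (Fin n) | S.card = s ∧ Pi.single i (1 : K) ∈
        Submodule.span K (f '' (S : Set (Fin n)))}
        = ↑(((Finset.univ : Finset (Fin n)).powersetCard s).filter (fun S => i' ∈ S)) := by
      ext S
      simp only [Set.mem_setOf_eq, Finset.coe_filter, Finset.mem_powersetCard_univ]
      constructor
      · rintro ⟨h1, h2⟩; exact ⟨h1, (hchar S (by omega)).mp h2⟩
      · rintro ⟨h1, h2⟩; exact ⟨h1, (hchar S (by omega)).mpr h2⟩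
    rw [hset, Nat.card_coe_set_eq, Set.ncard_coe_finset]
    have hbij : (((Finset.univ : Finset (Fin n)).powersetCard s).filter
        (fun S => i' ∈ S)).card
        = (Finset.powersetCard (s - 1) ((Finset.univ : Finset (Fin n)).erase i')).card := by
      refine Finset.card_bij' (fun S _ => S.erase i') (fun T _ => insert i' T) ?hi ?hj ?li ?ri
      case hi =>
        intro S hS
        simp only [Finset.mem_filter, Finset.mem_powersetCard_univ] at hS
        rw [Finset.mem_powersetCard]
        constructor
        · intro x hx
          simp only [Finset.mem_erase] at hx ⊢
          exact ⟨hx.1, Finset.mem_univ _⟩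
        · rw [Finset.card_erase_of_mem hS.2, hS.1]
      case hj =>
        intro T hT
        rw [Finset.mem_powersetCard] at hT
        have hni : i' ∉ T := fun h => (Finset.mem_erase.mp (hT.1 h)).1 rfl
        simp only [Finset.mem_filter, Finset.mem_powersetCard_univ,
          Finset.card_insert_of_notMem hni, hT.2, Finset.mem_insert_self, and_true]
        omega
      case li =>
        intro S hS
        simp only [Finset.mem_filter] at hS
        exact Finset.insert_erase hS.2
      case ri =>
        intro T hT
        rw [Finset.mem_powersetCard] at hT
        have hni : i' ∉ T := fun h => (Finset.mem_erase.mp (hT.1 h)).1 rfl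
        exact Finset.erase_insert hni
    rw [hbij, Finset.card_powersetCard, Finset.card_erase_of_mem (Finset.mem_univ _),
      Finset.card_univ, Fintype.card_fin]
  · intro s hs1 hs2
    have hset : {S : Finset (Fin n) | S.card = s ∧ Pi.single i (1 : K) ∈
        Submodule.span K (f '' (S : Set (Fin n)))}
        = ↑((Finset.univ : Finset (Fin n)).powersetCard s) := by
      ext S
      simp only [Set.mem_setOf_eq, Finset.mem_coe, Finset.mem_powersetCard_univ]
      constructor
      · rintro ⟨h1, -⟩; exact h1
      · intro h1; exact ⟨h1, hspan_top S (by omega)⟩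
    rw [hset, Nat.card_coe_set_eq, Set.ncard_coe_finset,
      Finset.card_powersetCard, Finset.card_univ, Fintype.card_fin]
end

section
/- Let $G \in \mathbb{F}_q^{k \times n}$ be a rank-$k$ matrix and, for $i \in [n]$, let $\widetilde{\tau}_i(G)$ be the number of uniformly random column draws (with replacement) until the $i$-th column of $G$ lies in the span of drawn columns. Then $\sum_{i=1}^{n} \mathbb{E}[\widetilde{\tau}_i(G)] = kn$. -/
open MeasureTheory Finset Submodule Module Set
open scoped Classical ENNReal

namespace Stmt13

variable (K : Type*) [Field K] {V : Type*} [AddCommGroup V] [Module K V]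
  [FiniteDimensional K V] {n : ℕ}

noncomputable def dd (g : Fin n → V) {r : ℕ} (s : Fin r → Fin n) : ℕ :=
  finrank K (span K (Set.range (g ∘ s)))

noncomputable def DD (g : Fin n → V) (r : ℕ) : ℕ := ∑ s : Fin r → Fin n, dd K g s

noncomputable def CC (g : Fin n → V) (r : ℕ) : ℕ :=
  ∑ s : Fin r → Fin n, (univ.filter fun j : Fin n => g j ∉ span K (Set.range (g ∘ s))).card

noncomputable def cc (g : Fin n → V) (i : Fin n) (r : ℕ) : ℕ :=
  (univ.filter fun s : Fin r → Fin n => g i ∉ span K (Set.range (g ∘ s))).card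

variable {K}

lemma range_comp_cons (g : Fin n → V) {r : ℕ} (j : Fin n) (s : Fin r → Fin n) :
    Set.range (g ∘ Fin.cons j s) = insert (g j) (Set.range (g ∘ s)) := by
  have : g ∘ Fin.cons j s = Fin.cons (g j) (g ∘ s) := by
    funext i
    refine Fin.cases ?_ ?_ i <;> simp
  rw [this, Fin.range_cons]

lemma dd_cons (g : Fin n → V) {r : ℕ} (j : Fin n) (s : Fin r → Fin n) :
    dd K g (Fin.cons j s) = dd K g s +
      (if g j ∈ span K (Set.range (g ∘ s)) then 0 else 1) := by
  unfold dd
  rw [range_comp_cons]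
  split_ifs with h
  · rw [Submodule.span_insert_eq_span h, add_zero]
  · have hx0 : g j ≠ 0 := fun h0 => h (h0 ▸ Submodule.zero_mem _)
    have hinf : (K ∙ g j) ⊓ span K (Set.range (g ∘ s)) = ⊥ := by
      rw [eq_bot_iff]
      rintro y ⟨hy1, hy2⟩
      obtain ⟨c, rfl⟩ := Submodule.mem_span_singleton.mp hy1
      rcases eq_or_ne c 0 with rfl | hc
      · simp
      · exfalso
        exact h (by simpa [smul_smul, inv_mul_cancel₀ hc] using
          Submodule.smul_mem _ c⁻¹ hy2)
    have := Submodule.finrank_sup_add_finrank_inf_eq (K ∙ g j) (span K (Set.range (g ∘ s)))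
    rw [hinf] at this
    simp only [finrank_bot, add_zero] at this
    rw [Submodule.span_insert, this, finrank_span_singleton hx0, add_comm]

lemma DD_succ (g : Fin n → V) (r : ℕ) :
    DD K g (r + 1) = n * DD K g r + CC K g r := by
  unfold DD CC
  have he := Fintype.sum_equiv (Fin.consEquiv (fun _ : Fin (r+1) => Fin n))
    (fun p : Fin n × (Fin r → Fin n) => dd K g (Fin.cons p.1 p.2)) (dd K g) (fun p => rfl)
  rw [← he, Fintype.sum_prod_type]
  simp only [dd_cons]
  rw [Finset.sum_comm]
  simp only [Finset.sum_add_distrib]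
  congr 1
  · rw [← Finset.sum_comm]
    simp [Finset.card_univ, mul_comm]
  · congr 1; funext s
    rw [Finset.card_filter]
    congr 1; funext j
    by_cases h : g j ∈ span K (Set.range (g ∘ s)) <;> simp [h]


set_option linter.unusedSectionVars false

lemma sum_cc (g : Fin n → V) (r : ℕ) :
    ∑ i : Fin n, cc K g i r = CC K g r := by
  unfold cc CC
  simp only [Finset.card_filter]
  rw [Finset.sum_comm]

lemma DD_zero (g : Fin n → V) : DD K g 0 = 0 := by
  unfold DD dd
  simp [Set.range_eq_empty]

lemma dd_le (g : Fin n → V) {r : ℕ} (s : Fin r → Fin n) :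
    dd K g s ≤ finrank K (span K (Set.range g)) := by
  apply Submodule.finrank_mono
  apply Submodule.span_mono
  rintro x ⟨j, rfl⟩
  exact ⟨s j, rfl⟩

lemma DD_le (g : Fin n → V) {kk : ℕ} (hg : finrank K (span K (Set.range g)) = kk) (r : ℕ) :
    DD K g r ≤ kk * n ^ r := by
  calc DD K g r ≤ ∑ _s : Fin r → Fin n, kk := Finset.sum_le_sum fun s _ => hg ▸ dd_le g s
  _ = kk * n ^ r := by simp [Finset.card_univ, mul_comm]

lemma card_avoid (hn : 0 < n) (r : ℕ) (i : Fin n) :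
    (univ.filter fun s : Fin r → Fin n => ∀ j, s j ≠ i).card = (n - 1) ^ r := by
  rw [← Fintype.card_subtype]
  rw [Fintype.card_congr (Equiv.subtypePiEquivPi (p := fun (_ : Fin r) (x : Fin n) => x ≠ i))]
  rw [Fintype.card_pi]
  have : Fintype.card {x : Fin n // x ≠ i} = n - 1 := by
    simp [Fintype.card_subtype_compl, Fintype.card_subtype_eq]
  simp [this]

lemma card_nonsurj (hn : 0 < n) (r : ℕ) :
    (univ.filter fun s : Fin r → Fin n => ¬ Function.Surjective s).card ≤ n * (n - 1) ^ r := by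
  have hsub : (univ.filter fun s : Fin r → Fin n => ¬ Function.Surjective s) ⊆
      univ.biUnion fun i : Fin n => univ.filter fun s : Fin r → Fin n => ∀ j, s j ≠ i := by
    intro s hs
    simp only [Finset.mem_filter, Function.Surjective, not_forall] at hs
    obtain ⟨i, hi⟩ := hs.2
    push_neg at hi
    simp only [Finset.mem_biUnion]
    exact ⟨i, Finset.mem_univ i, Finset.mem_filter.mpr ⟨Finset.mem_univ s, hi⟩⟩
  calc _ ≤ _ := Finset.card_le_card hsub
  _ ≤ ∑ i : Fin n, (univ.filter fun s : Fin r → Fin n => ∀ j, s j ≠ i).card :=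
      Finset.card_biUnion_le
  _ = n * (n - 1) ^ r := by simp [card_avoid hn]

lemma dd_surj (g : Fin n → V) {kk r : ℕ} (hg : finrank K (span K (Set.range g)) = kk)
    {s : Fin r → Fin n} (hs : Function.Surjective s) : dd K g s = kk := by
  unfold dd
  rw [Set.range_comp, hs.range_eq, Set.image_univ, hg]

lemma DD_ge (g : Fin n → V) {kk : ℕ} (hg : finrank K (span K (Set.range g)) = kk)
    (hn : 0 < n) (r : ℕ) :
    kk * n ^ r ≤ DD K g r + kk * (n * (n - 1) ^ r) := by
  have h1 : ∀ s : Fin r → Fin n, kk ≤ dd K g s +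
      (if Function.Surjective s then 0 else kk) := by
    intro s
    split_ifs with h
    · rw [dd_surj g hg h]; simp
    · exact le_add_self
  calc kk * n ^ r = ∑ _s : Fin r → Fin n, kk := by simp [Finset.card_univ, mul_comm]
  _ ≤ ∑ s : Fin r → Fin n, (dd K g s + if Function.Surjective s then 0 else kk) :=
      Finset.sum_le_sum fun s _ => h1 s
  _ = DD K g r + ∑ s : Fin r → Fin n, (if Function.Surjective s then 0 else kk) := by
      rw [Finset.sum_add_distrib]; rfl
  _ ≤ DD K g r + kk * (n * (n - 1) ^ r) := by
      gcongr
      calc ∑ s : Fin r → Fin n, (if Function.Surjective s then 0 else kk)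
          = ∑ s ∈ univ.filter (fun s : Fin r → Fin n => ¬ Function.Surjective s), kk := by
            rw [Finset.sum_filter]
            congr 1; funext s
            by_cases h : Function.Surjective s <;> simp [h]
      _ = (univ.filter fun s : Fin r → Fin n => ¬ Function.Surjective s).card * kk := by
            rw [Finset.sum_const, smul_eq_mul]
      _ ≤ (n * (n-1)^r) * kk := by gcongr; exact card_nonsurj hn r
      _ = kk * (n * (n-1)^r) := mul_comm _ _


lemma partial_sum (g : Fin n → V) (hn : 0 < n) (R : ℕ) :
    ∑ r ∈ Finset.range R, (CC K g r : ℝ≥0∞) * ((n : ℝ≥0∞))⁻¹ ^ r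
      = (DD K g R : ℝ≥0∞) * n * ((n : ℝ≥0∞))⁻¹ ^ R := by
  have hν0 : (n : ℝ≥0∞) ≠ 0 := Nat.cast_ne_zero.mpr hn.ne'
  have hν : (n : ℝ≥0∞) * ((n : ℝ≥0∞))⁻¹ = 1 :=
    ENNReal.mul_inv_cancel hν0 (ENNReal.natCast_ne_top n)
  have key : ∀ (a : ℝ≥0∞) (R : ℕ), a * (n : ℝ≥0∞) * (((n : ℝ≥0∞))⁻¹ ^ R * ((n : ℝ≥0∞))⁻¹)
      = a * ((n : ℝ≥0∞))⁻¹ ^ R := by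
    intro a R
    calc a * (n : ℝ≥0∞) * (((n : ℝ≥0∞))⁻¹ ^ R * ((n : ℝ≥0∞))⁻¹)
        = a * ((n : ℝ≥0∞))⁻¹ ^ R * ((n : ℝ≥0∞) * ((n : ℝ≥0∞))⁻¹) := by ring
    _ = a * ((n : ℝ≥0∞))⁻¹ ^ R := by rw [hν, mul_one]
  induction R with
  | zero => simp [DD_zero]
  | succ R ih =>
    rw [Finset.sum_range_succ, ih, DD_succ, pow_succ]
    push_cast
    rw [add_mul, add_mul, key, key]
    ring

lemma tsum_CC (g : Fin n → V) {kk : ℕ} (hg : finrank K (span K (Set.range g)) = kk)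
    (hn : 0 < n) :
    ∑' r : ℕ, (CC K g r : ℝ≥0∞) * ((n : ℝ≥0∞))⁻¹ ^ r = (kk : ℝ≥0∞) * n := by
  have hν0 : (n : ℝ≥0∞) ≠ 0 := Nat.cast_ne_zero.mpr hn.ne'
  have hνtop : (n : ℝ≥0∞) ≠ ⊤ := ENNReal.natCast_ne_top n
  have hν : (n : ℝ≥0∞) * ((n : ℝ≥0∞))⁻¹ = 1 := ENNReal.mul_inv_cancel hν0 hνtop
  have hνpow : ∀ R : ℕ, (n : ℝ≥0∞) ^ R * ((n : ℝ≥0∞))⁻¹ ^ R = 1 := fun R => by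
    rw [← mul_pow, hν, one_pow]
  have hpart : ∀ R, ∑ r ∈ Finset.range R, (CC K g r : ℝ≥0∞) * ((n : ℝ≥0∞))⁻¹ ^ r
      = (DD K g R : ℝ≥0∞) * n * ((n : ℝ≥0∞))⁻¹ ^ R := fun R => partial_sum g hn R
  have h1 : Filter.Tendsto (fun R => ∑ r ∈ Finset.range R,
      (CC K g r : ℝ≥0∞) * ((n : ℝ≥0∞))⁻¹ ^ r) Filter.atTop
      (nhds (∑' r : ℕ, (CC K g r : ℝ≥0∞) * ((n : ℝ≥0∞))⁻¹ ^ r)) :=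
    ENNReal.tendsto_nat_tsum _
  suffices h2 : Filter.Tendsto (fun R => ∑ r ∈ Finset.range R,
      (CC K g r : ℝ≥0∞) * ((n : ℝ≥0∞))⁻¹ ^ r) Filter.atTop
      (nhds ((kk : ℝ≥0∞) * n)) from tendsto_nhds_unique h1 h2
  simp only [funext hpart]
  have hcancel : ∀ (a : ℝ≥0∞) (R : ℕ), a * (n : ℝ≥0∞) ^ R * (n : ℝ≥0∞) * ((n : ℝ≥0∞))⁻¹ ^ R
      = a * (n : ℝ≥0∞) := by
    intro a R
    calc a * (n : ℝ≥0∞) ^ R * (n : ℝ≥0∞) * ((n : ℝ≥0∞))⁻¹ ^ R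
        = a * (n : ℝ≥0∞) * ((n : ℝ≥0∞) ^ R * ((n : ℝ≥0∞))⁻¹ ^ R) := by ring
    _ = a * (n : ℝ≥0∞) := by rw [hνpow, mul_one]
  -- upper bound
  have hub : ∀ R, (DD K g R : ℝ≥0∞) * n * ((n : ℝ≥0∞))⁻¹ ^ R ≤ (kk : ℝ≥0∞) * n := by
    intro R
    have h : ((DD K g R : ℕ) : ℝ≥0∞) ≤ ((kk * n ^ R : ℕ) : ℝ≥0∞) := Nat.cast_le.mpr (DD_le g hg R)
    push_cast at h
    calc (DD K g R : ℝ≥0∞) * n * ((n : ℝ≥0∞))⁻¹ ^ R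
        ≤ ((kk : ℝ≥0∞) * (n : ℝ≥0∞) ^ R) * n * ((n : ℝ≥0∞))⁻¹ ^ R :=
          mul_le_mul_left (mul_le_mul_left h _) _
    _ = (kk : ℝ≥0∞) * n := hcancel kk R
  -- lower bound
  have hlb : ∀ R, (kk : ℝ≥0∞) * n ≤ (DD K g R : ℝ≥0∞) * n * ((n : ℝ≥0∞))⁻¹ ^ R
      + ((kk : ℝ≥0∞) * n * n) * (((n : ℝ≥0∞) - 1) * ((n : ℝ≥0∞))⁻¹) ^ R := by
    intro R
    have h : ((kk * n ^ R : ℕ) : ℝ≥0∞) ≤ ((DD K g R + kk * (n * (n - 1) ^ R) : ℕ) : ℝ≥0∞) :=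
      Nat.cast_le.mpr (DD_ge g hg hn R)
    push_cast at h
    have h2 := mul_le_mul_left (mul_le_mul_left h ((n : ℝ≥0∞))) (((n : ℝ≥0∞))⁻¹ ^ R)
    calc (kk : ℝ≥0∞) * n = (kk : ℝ≥0∞) * (n : ℝ≥0∞) ^ R * n * ((n : ℝ≥0∞))⁻¹ ^ R :=
          (hcancel kk R).symm
    _ ≤ ((DD K g R : ℝ≥0∞) + (kk : ℝ≥0∞) * ((n : ℝ≥0∞) * ((n : ℝ≥0∞) - 1) ^ R)) * n
          * ((n : ℝ≥0∞))⁻¹ ^ R := h2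
    _ = (DD K g R : ℝ≥0∞) * n * ((n : ℝ≥0∞))⁻¹ ^ R
          + ((kk : ℝ≥0∞) * n * n) * (((n : ℝ≥0∞) - 1) ^ R * ((n : ℝ≥0∞))⁻¹ ^ R) := by ring
    _ = _ := by rw [← mul_pow]
  have hq1 : ((n : ℝ≥0∞) - 1) * ((n : ℝ≥0∞))⁻¹ < 1 := by
    have hlt : (n : ℝ≥0∞) - 1 < (n : ℝ≥0∞) :=
      ENNReal.sub_lt_self hνtop hν0 one_ne_zero
    rw [show ((n : ℝ≥0∞) - 1) * ((n : ℝ≥0∞))⁻¹ = ((n : ℝ≥0∞) - 1) / (n : ℝ≥0∞) from rfl,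
      ENNReal.div_lt_iff (Or.inl hν0) (Or.inl hνtop), one_mul]
    exact hlt
  have hE0 : Filter.Tendsto
      (fun R => ((kk : ℝ≥0∞) * n * n) * (((n : ℝ≥0∞) - 1) * ((n : ℝ≥0∞))⁻¹) ^ R)
      Filter.atTop (nhds 0) := by
    have := ENNReal.Tendsto.const_mul
      (ENNReal.tendsto_pow_atTop_nhds_zero_of_lt_one hq1)
      (Or.inr (show (kk : ℝ≥0∞) * n * n ≠ ⊤ by finiteness))
    simpa using this
  have hlow : Filter.Tendsto
      (fun R => (kk : ℝ≥0∞) * n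
        - ((kk : ℝ≥0∞) * n * n) * (((n : ℝ≥0∞) - 1) * ((n : ℝ≥0∞))⁻¹) ^ R)
      Filter.atTop (nhds ((kk : ℝ≥0∞) * n)) := by
    have hc : Continuous (fun x : ℝ≥0∞ => (kk : ℝ≥0∞) * n - x) :=
      ENNReal.continuous_sub_left (by finiteness)
    have := (hc.tendsto 0).comp hE0
    simpa [Function.comp_def] using this
  exact tendsto_of_tendsto_of_tendsto_of_le_of_le hlow tendsto_const_nhds
    (fun R => tsub_le_iff_right.mpr (hlb R)) hub


section Meas

variable {n : ℕ}

lemma measurableSet_cyl {r : ℕ} (P : (Fin r → Fin n) → Prop) :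
    MeasurableSet {ω : ℕ → Fin n | P fun j => ω (j : ℕ)} := by
  have h : {ω : ℕ → Fin n | P fun j => ω (j : ℕ)} =
      (fun (ω : ℕ → Fin n) (j : Fin r) => ω (j : ℕ)) ⁻¹' {s | P s} := rfl
  rw [h]
  have hm : Measurable (fun (ω : ℕ → Fin n) (j : Fin r) => ω (j : ℕ)) :=
    measurable_pi_lambda _ fun j => measurable_pi_apply _
  exact hm (Set.Countable.measurableSet (Set.to_countable _))

lemma measure_cyl (hn : 0 < n) (μ : Measure (ℕ → Fin n))
    (hiid : ∀ (r : ℕ) (s : ℕ → Fin n),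
      μ {ω | ∀ j < r, ω j = s j} = ((n : ENNReal))⁻¹ ^ r)
    (r : ℕ) (P : (Fin r → Fin n) → Prop) :
    μ {ω : ℕ → Fin n | P fun j => ω (j : ℕ)} =
      ((univ.filter P).card : ℝ≥0∞) * ((n : ℝ≥0∞))⁻¹ ^ r := by
  have : Nonempty (Fin n) := ⟨⟨0, hn⟩⟩
  set ext : (Fin r → Fin n) → (ℕ → Fin n) := fun s m =>
    if h : m < r then s ⟨m, h⟩ else Classical.arbitrary _ with hext
  have hset : {ω : ℕ → Fin n | P fun j => ω (j : ℕ)} =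
      ⋃ s ∈ (univ.filter P : Finset (Fin r → Fin n)),
        {ω : ℕ → Fin n | ∀ j < r, ω j = ext s j} := by
    ext ω
    simp only [Set.mem_setOf_eq, Set.mem_iUnion, Finset.mem_filter, Finset.mem_univ, true_and]
    constructor
    · intro h
      refine ⟨fun j => ω (j : ℕ), h, fun j hj => ?_⟩
      rw [hext]; simp [hj]
    · rintro ⟨s, hs, hj⟩
      have : (fun j : Fin r => ω (j : ℕ)) = s := by
        funext j
        have := hj (j : ℕ) j.2
        rw [hext] at this
        simpa [j.2] using this
      rwa [this]
  rw [hset, measure_biUnion_finset]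
  · rw [Finset.sum_congr rfl (fun s _ => hiid r (ext s)), Finset.sum_const, nsmul_eq_mul]
  · intro s hs t ht hst
    refine Set.disjoint_left.mpr fun ω hω1 hω2 => hst ?_
    funext j
    have h1 := hω1 (j : ℕ) j.2
    have h2 := hω2 (j : ℕ) j.2
    rw [hext] at h1 h2
    simp only [j.2, dif_pos] at h1 h2
    rw [← h1, ← h2]
  · intro s hs
    have : {ω : ℕ → Fin n | ∀ j < r, ω j = ext s j} =
        {ω : ℕ → Fin n | (fun t : Fin r → Fin n => ∀ j : Fin r, t j = s j)
          fun j => ω (j : ℕ)} := by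
      ext ω
      simp only [Set.mem_setOf_eq]
      constructor
      · intro h j
        have := h (j : ℕ) j.2
        rw [hext] at this
        simpa [j.2] using this
      · intro h j hj
        have := h ⟨j, hj⟩
        rw [hext]
        simpa [hj] using this
    rw [this]
    exact measurableSet_cyl (fun t : Fin r → Fin n => ∀ j : Fin r, t j = s j)

lemma measure_avoid (hn : 0 < n) (μ : Measure (ℕ → Fin n)) [IsProbabilityMeasure μ]
    (hiid : ∀ (r : ℕ) (s : ℕ → Fin n),
      μ {ω | ∀ j < r, ω j = s j} = ((n : ENNReal))⁻¹ ^ r)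
    (i : Fin n) : μ {ω : ℕ → Fin n | ∀ j : ℕ, ω j ≠ i} = 0 := by
  have hν0 : (n : ℝ≥0∞) ≠ 0 := Nat.cast_ne_zero.mpr hn.ne'
  have hνtop : (n : ℝ≥0∞) ≠ ⊤ := ENNReal.natCast_ne_top n
  have hbd : ∀ r : ℕ, μ {ω : ℕ → Fin n | ∀ j : ℕ, ω j ≠ i}
      ≤ (((n - 1 : ℕ) : ℝ≥0∞) * ((n : ℝ≥0∞))⁻¹) ^ r := by
    intro r
    have hsub : {ω : ℕ → Fin n | ∀ j : ℕ, ω j ≠ i}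
        ⊆ {ω : ℕ → Fin n | (fun s : Fin r → Fin n => ∀ j, s j ≠ i) fun j => ω (j : ℕ)} :=
      fun ω hω j => hω (j : ℕ)
    calc μ _ ≤ μ {ω : ℕ → Fin n | (fun s : Fin r → Fin n => ∀ j, s j ≠ i) fun j => ω (j : ℕ)} :=
          measure_mono hsub
    _ = (((n - 1) ^ r : ℕ) : ℝ≥0∞) * ((n : ℝ≥0∞))⁻¹ ^ r := by
          rw [measure_cyl hn μ hiid r (fun s : Fin r → Fin n => ∀ j, s j ≠ i)]
          congr 2
          rw [← card_avoid hn r i]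
          congr 1
          ext x
          simp
    _ = (((n - 1 : ℕ) : ℝ≥0∞) * ((n : ℝ≥0∞))⁻¹) ^ r := by rw [mul_pow]; push_cast; ring
  have hq1 : ((n - 1 : ℕ) : ℝ≥0∞) * ((n : ℝ≥0∞))⁻¹ < 1 := by
    rw [show ((n - 1 : ℕ) : ℝ≥0∞) * ((n : ℝ≥0∞))⁻¹ = ((n - 1 : ℕ) : ℝ≥0∞) / (n : ℝ≥0∞) from rfl,
      ENNReal.div_lt_iff (Or.inl hν0) (Or.inl hνtop), one_mul]
    exact_mod_cast Nat.sub_lt hn one_pos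
  have h0 := ENNReal.tendsto_pow_atTop_nhds_zero_of_lt_one hq1
  have := ge_of_tendsto h0 (Filter.Eventually.of_forall hbd)
  simpa using this

end Meas

theorem key {K : Type*} [Field K] {k n : ℕ} (hn : 0 < n)
    (g : Fin n → (Fin k → K)) (hg : finrank K (span K (Set.range g)) = k)
    (μ : Measure (ℕ → Fin n)) [IsProbabilityMeasure μ]
    (hiid : ∀ (r : ℕ) (s : ℕ → Fin n),
      μ {ω | ∀ j < r, ω j = s j} = ((n : ENNReal))⁻¹ ^ r) :
    (∑ i : Fin n,
      ∫ ω, ((sInf {r : ℕ | g i ∈ span K ((fun j => g (ω j)) '' Set.Iio r)} : ℕ) : ℝ) ∂μ)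
      = (k : ℝ) * (n : ℝ) := by
  set Sset : Fin n → (ℕ → Fin n) → Set ℕ :=
    fun i ω => {r : ℕ | g i ∈ span K ((fun j => g (ω j)) '' Set.Iio r)} with hSdef
  set τ : Fin n → (ℕ → Fin n) → ℕ := fun i ω => sInf (Sset i ω) with hτdef
  have himage : ∀ (ω : ℕ → Fin n) (r : ℕ),
      (fun j => g (ω j)) '' Set.Iio r = Set.range (g ∘ fun j : Fin r => ω (j : ℕ)) := by
    intro ω r
    ext x
    simp only [Set.mem_image, Set.mem_Iio, Set.mem_range, Function.comp_apply]
    constructor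
    · rintro ⟨j, hj, rfl⟩; exact ⟨⟨j, hj⟩, rfl⟩
    · rintro ⟨j, rfl⟩; exact ⟨(j : ℕ), j.2, rfl⟩
  have hmono : ∀ i ω (r r' : ℕ), r ≤ r' → r ∈ Sset i ω → r' ∈ Sset i ω := by
    intro i ω r r' h hr
    exact Submodule.span_mono (Set.image_mono (Set.Iio_subset_Iio h)) hr
  have hAr : ∀ (i : Fin n) (r : ℕ), {ω : ℕ → Fin n | r ∈ Sset i ω} =
      {ω : ℕ → Fin n | (fun s : Fin r → Fin n => g i ∈ span K (Set.range (g ∘ s)))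
        fun j => ω (j : ℕ)} := by
    intro i r
    ext ω
    simp only [hSdef, Set.mem_setOf_eq, himage ω r]
  have hmeasA : ∀ (i : Fin n) (r : ℕ), MeasurableSet {ω : ℕ → Fin n | r ∈ Sset i ω} := by
    intro i r
    rw [hAr]
    exact measurableSet_cyl (fun s : Fin r → Fin n => g i ∈ span K (Set.range (g ∘ s)))
  have hlt_iff : ∀ i ω (r : ℕ), r < τ i ω ↔ (r ∉ Sset i ω ∧ ∃ m, m ∈ Sset i ω) := by
    intro i ω r
    constructor
    · intro h
      have hne : (Sset i ω).Nonempty := by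
        by_contra hemp
        rw [Set.not_nonempty_iff_eq_empty] at hemp
        simp [hτdef, hemp, Nat.sInf_empty] at h
      exact ⟨fun hr => absurd (Nat.sInf_le hr) (not_le.mpr h), hne⟩
    · rintro ⟨hr, m, hm⟩
      by_contra hle
      push_neg at hle
      exact hr (hmono i ω _ r hle (Nat.sInf_mem ⟨m, hm⟩))
  have hmeas_lt : ∀ (i : Fin n) (r : ℕ), MeasurableSet {ω : ℕ → Fin n | r < τ i ω} := by
    intro i r
    have : {ω : ℕ → Fin n | r < τ i ω} =
        {ω : ℕ → Fin n | r ∈ Sset i ω}ᶜ ∩ ⋃ m : ℕ, {ω : ℕ → Fin n | m ∈ Sset i ω} := by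
      ext ω
      simp only [Set.mem_inter_iff, Set.mem_compl_iff, Set.mem_iUnion, Set.mem_setOf_eq]
      exact hlt_iff i ω r
    rw [this]
    exact ((hmeasA i r).compl).inter (MeasurableSet.iUnion fun m => hmeasA i m)
  have hmeas_tau : ∀ i : Fin n, Measurable (τ i) := by
    intro i
    apply measurable_to_countable'
    intro m
    match m with
    | 0 =>
      have : (τ i) ⁻¹' {0} = {ω : ℕ → Fin n | 0 < τ i ω}ᶜ := by
        ext ω; simp [Nat.pos_iff_ne_zero]
      rw [this]
      exact (hmeas_lt i 0).compl
    | (m + 1) =>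
      have : (τ i) ⁻¹' {m + 1} =
          {ω : ℕ → Fin n | m < τ i ω} ∩ {ω : ℕ → Fin n | m + 1 < τ i ω}ᶜ := by
        ext ω
        simp only [Set.mem_preimage, Set.mem_singleton_iff, Set.mem_inter_iff,
          Set.mem_compl_iff, Set.mem_setOf_eq]
        omega
      rw [this]
      exact (hmeas_lt i m).inter (hmeas_lt i (m + 1)).compl
  have hSempty_sub : ∀ i : Fin n, {ω : ℕ → Fin n | ∀ m, m ∉ Sset i ω}
      ⊆ {ω : ℕ → Fin n | ∀ j : ℕ, ω j ≠ i} := by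
    intro i ω hω j hji
    apply hω (j + 1)
    apply Submodule.subset_span
    exact ⟨j, Nat.lt_succ_self j, by simp [hji]⟩
  have hmeasure_lt : ∀ (i : Fin n) (r : ℕ),
      μ {ω : ℕ → Fin n | r < τ i ω} = (cc K g i r : ℝ≥0∞) * ((n : ℝ≥0∞))⁻¹ ^ r := by
    intro i r
    have hBval : μ {ω : ℕ → Fin n | r ∉ Sset i ω} =
        (cc K g i r : ℝ≥0∞) * ((n : ℝ≥0∞))⁻¹ ^ r := by
      have hBset : {ω : ℕ → Fin n | r ∉ Sset i ω} =
          {ω : ℕ → Fin n | (fun s : Fin r → Fin n => g i ∉ span K (Set.range (g ∘ s)))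
            fun j => ω (j : ℕ)} := by
        ext ω
        simp only [hSdef, Set.mem_setOf_eq, himage ω r]
      rw [hBset, measure_cyl hn μ hiid r
        (fun s : Fin r → Fin n => g i ∉ span K (Set.range (g ∘ s)))]
      congr 2
      rw [cc]
      congr 1
      ext x
      simp
    have hAB : {ω : ℕ → Fin n | r < τ i ω} ⊆ {ω : ℕ → Fin n | r ∉ Sset i ω} :=
      fun ω hω => ((hlt_iff i ω r).mp hω).1
    have hBA : {ω : ℕ → Fin n | r ∉ Sset i ω} ⊆
        {ω : ℕ → Fin n | r < τ i ω} ∪ {ω : ℕ → Fin n | ∀ m, m ∉ Sset i ω} := by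
      intro ω hω
      by_cases hne : ∃ m, m ∈ Sset i ω
      · exact Or.inl ((hlt_iff i ω r).mpr ⟨hω, hne⟩)
      · push_neg at hne
        exact Or.inr hne
    rw [← hBval]
    refine le_antisymm (measure_mono hAB) ?_
    calc μ {ω : ℕ → Fin n | r ∉ Sset i ω}
        ≤ μ ({ω : ℕ → Fin n | r < τ i ω} ∪ {ω : ℕ → Fin n | ∀ m, m ∉ Sset i ω}) :=
          measure_mono hBA
    _ ≤ μ {ω : ℕ → Fin n | r < τ i ω} + μ {ω : ℕ → Fin n | ∀ m, m ∉ Sset i ω} :=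
          measure_union_le _ _
    _ ≤ μ {ω : ℕ → Fin n | r < τ i ω} + 0 := by
          gcongr
          calc μ {ω : ℕ → Fin n | ∀ m, m ∉ Sset i ω}
              ≤ μ {ω : ℕ → Fin n | ∀ j : ℕ, ω j ≠ i} := measure_mono (hSempty_sub i)
          _ = 0 := measure_avoid hn μ hiid i
    _ = μ {ω : ℕ → Fin n | r < τ i ω} := add_zero _
  have hlint : ∀ i : Fin n, ∫⁻ ω, ((τ i ω : ℕ) : ℝ≥0∞) ∂μ
      = ∑' r : ℕ, (cc K g i r : ℝ≥0∞) * ((n : ℝ≥0∞))⁻¹ ^ r := by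
    intro i
    have hpt : ∀ ω, ((τ i ω : ℕ) : ℝ≥0∞)
        = ∑' r : ℕ, Set.indicator {ω' : ℕ → Fin n | r < τ i ω'} (fun _ => (1 : ℝ≥0∞)) ω := by
      intro ω
      rw [tsum_eq_sum (s := Finset.range (τ i ω)) (fun r hr =>
        Set.indicator_of_notMem (by
          simp only [Finset.mem_range, not_lt] at hr
          simp only [Set.mem_setOf_eq, not_lt]
          exact hr) _)]
      rw [Finset.sum_congr rfl (fun r hr =>
        Set.indicator_of_mem (by simpa using hr) _), Finset.sum_const, Finset.card_range,
        nsmul_eq_mul, mul_one]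
    calc ∫⁻ ω, ((τ i ω : ℕ) : ℝ≥0∞) ∂μ
        = ∫⁻ ω, ∑' r : ℕ, Set.indicator {ω' : ℕ → Fin n | r < τ i ω'}
            (fun _ => (1 : ℝ≥0∞)) ω ∂μ := lintegral_congr hpt
    _ = ∑' r : ℕ, ∫⁻ ω, Set.indicator {ω' : ℕ → Fin n | r < τ i ω'}
            (fun _ => (1 : ℝ≥0∞)) ω ∂μ :=
          lintegral_tsum fun r => (measurable_const.indicator (hmeas_lt i r)).aemeasurable
    _ = ∑' r : ℕ, μ {ω' : ℕ → Fin n | r < τ i ω'} :=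
          tsum_congr fun r => lintegral_indicator_one (hmeas_lt i r)
    _ = ∑' r : ℕ, (cc K g i r : ℝ≥0∞) * ((n : ℝ≥0∞))⁻¹ ^ r :=
          tsum_congr fun r => hmeasure_lt i r
  have htot : ∑ i : Fin n, ∫⁻ ω, ((τ i ω : ℕ) : ℝ≥0∞) ∂μ = (k : ℝ≥0∞) * n := by
    rw [Finset.sum_congr rfl fun i _ => hlint i]
    rw [← Summable.tsum_finsetSum fun (i : Fin n) _ => ENNReal.summable]
    calc ∑' r : ℕ, ∑ i : Fin n, (cc K g i r : ℝ≥0∞) * ((n : ℝ≥0∞))⁻¹ ^ r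
        = ∑' r : ℕ, (CC K g r : ℝ≥0∞) * ((n : ℝ≥0∞))⁻¹ ^ r := by
          refine tsum_congr fun r => ?_
          rw [← Finset.sum_mul]
          congr 1
          rw [← Nat.cast_sum, sum_cc g r]
    _ = (k : ℝ≥0∞) * n := tsum_CC g hg hn
  have hfin : ∀ i : Fin n, ∫⁻ ω, ((τ i ω : ℕ) : ℝ≥0∞) ∂μ ≠ ⊤ := by
    intro i
    have hle : ∫⁻ ω, ((τ i ω : ℕ) : ℝ≥0∞) ∂μ
        ≤ ∑ i : Fin n, ∫⁻ ω, ((τ i ω : ℕ) : ℝ≥0∞) ∂μ :=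
      Finset.single_le_sum (f := fun i : Fin n => ∫⁻ ω, ((τ i ω : ℕ) : ℝ≥0∞) ∂μ)
        (fun i _ => zero_le) (Finset.mem_univ i)
    rw [htot] at hle
    exact ne_top_of_le_ne_top (by finiteness) hle
  have hint : ∀ i : Fin n, ∫ ω, ((τ i ω : ℕ) : ℝ) ∂μ
      = (∫⁻ ω, ((τ i ω : ℕ) : ℝ≥0∞) ∂μ).toReal := by
    intro i
    have hm : AEMeasurable (fun ω => ((τ i ω : ℕ) : ℝ≥0∞)) μ :=
      (measurable_from_top.comp (hmeas_tau i)).aemeasurable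
    have hae : ∀ᵐ ω ∂μ, ((τ i ω : ℕ) : ℝ≥0∞) < ⊤ :=
      Filter.Eventually.of_forall fun ω => ENNReal.natCast_lt_top _
    have h := integral_toReal hm hae
    rw [← h]
    simp only [ENNReal.toReal_natCast]
  calc ∑ i : Fin n, ∫ ω, ((τ i ω : ℕ) : ℝ) ∂μ
      = ∑ i : Fin n, (∫⁻ ω, ((τ i ω : ℕ) : ℝ≥0∞) ∂μ).toReal :=
        Finset.sum_congr rfl fun i _ => hint i
  _ = (∑ i : Fin n, ∫⁻ ω, ((τ i ω : ℕ) : ℝ≥0∞) ∂μ).toReal :=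
        (ENNReal.toReal_sum fun i _ => hfin i).symm
  _ = ((k : ℝ≥0∞) * n).toReal := by rw [htot]
  _ = (k : ℝ) * n := by simp [ENNReal.toReal_mul]

end Stmt13

theorem stmt_13 {K : Type*} [Field K] [Fintype K] (k n : ℕ) (hk : 1 ≤ k) (hkn : k ≤ n)
    (G : Matrix (Fin k) (Fin n) K) (hG : G.rank = k)
    (μ : Measure (ℕ → Fin n)) [IsProbabilityMeasure μ]
    (hiid : ∀ (r : ℕ) (s : ℕ → Fin n),
      μ {ω | ∀ j < r, ω j = s j} = ((n : ENNReal))⁻¹ ^ r) :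
    (∑ i : Fin n,
      ∫ ω, ((sInf {r : ℕ | (fun a : Fin k => G a i) ∈
          Submodule.span K ((fun j (a : Fin k) => G a (ω j)) '' Set.Iio r)} : ℕ) : ℝ) ∂μ)
      = (k : ℝ) * (n : ℝ) := by
  have hn : 0 < n := lt_of_lt_of_le hk hkn
  have hg : Module.finrank K
      (Submodule.span K (Set.range fun j (a : Fin k) => G a j)) = k := by
    have h2 := Matrix.rank_eq_finrank_span_cols G
    rw [hG] at h2
    exact h2.symm
  exact Stmt13.key hn (fun j (a : Fin k) => G a j) hg μ hiid
end
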